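/- arXiv:2010.02953 — 7 statements merged into one kernel-verified Lean document; each statement's English description precedes it below -/
import Mathlib

section
/- Let ℓ ≥ 3 and let (C_R, C_B) be any bicolored cycle of length ℓ. For every ε > 0 there exists n_0 such that for all n ≥ n_0 the following holds: whenever R and B are simple graphs on a common vertex set of size n with e(R) ≥ (1/2 + ε)·C(n,2) and e(B) ≥ (1/2 + ε)·C(n,2), there is an injective map φ from the vertex set of the cycle to the common vertex set such that every edge of C_R is mapped to an edge of R and every edge of C_B is mapped to an edge of B. -/
/-!
Write `ℓ = 2t + 2` or `ℓ = 2t + 3` and put `Γ = R ⊓ B`. Counting `t+1`-sets of common neighbours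
(Kővári–Sós–Turán) shows that a graph with `Ω(n²)` edges contains `K_{t+1,t+1}`, hence a path of
length `2t + 1` whose ends are adjacent. Since `e(R ⊔ B) + e(Γ) = e(R) + e(B) ≥ (1 + 2ε) C(n,2)`,
`Γ` has `Ω(n²)` edges, so for even `ℓ` it contains a cycle of length `ℓ`, which carries every
bicolouring of `C_ℓ`.

For odd `ℓ`, call a pair of vertices linked if a path of length `2t + 2 = ℓ - 1` in `Γ` joins
them. The edges of `Γ` whose ends are not joined by a path of length `2t + 1` span no
`K_{t+1,t+1}`, so there are `o(n²)` of them. If `vw` is one of the other edges, then every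
`Γ`-neighbour of `w` off that path is linked to `v`; together with `∑ d(v) ≤ ∑_v max_{w ∼ v} d(w)`
this gives at least `e(Γ) - o(n²)` linked pairs. As `e(R ⊔ B) + e(Γ) > C(n,2) + o(n²)`, some
linked pair is an edge of `R` or of `B`, and that edge closes the path into the required cycle
(for a monochromatic cycle take `R ⊓ R` or `B ⊓ B` in place of `Γ`).
-/

open SimpleGraph Set

/-- The cycle of length `ℓ` on vertex set `ZMod ℓ`, with edges `{i, i+1}`. -/
def cycleG (ℓ : ℕ) : SimpleGraph (ZMod ℓ) :=
  SimpleGraph.fromRel (fun u v => v = u + 1)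

open Finset

namespace SimpleGraph

variable {V : Type*}

def pathLinked (G : SimpleGraph V) (L : ℕ) : SimpleGraph V where
  Adj p q := p ≠ q ∧ ∃ P : G.Walk p q, P.IsPath ∧ P.length = L
  symm := ⟨fun _ _ ⟨hne, P, hP, hL⟩ => ⟨hne.symm, P.reverse, hP.reverse, by simpa⟩⟩
  loopless := ⟨fun _ h => h.1 rfl⟩

noncomputable instance (G : SimpleGraph V) (L : ℕ) : DecidableRel (G.pathLinked L).Adj :=
  Classical.decRel _

lemma IsCompleteBetween.exists_isPath [DecidableEq V] {G : SimpleGraph V} (t : ℕ)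
    {X Y : Finset V} (hX : #X = t + 1) (hY : #Y = t + 1) (h : G.IsCompleteBetween X Y) {x : V}
    (hx : x ∈ X) :
    ∃ y ∈ Y, ∃ P : G.Walk x y,
      P.IsPath ∧ P.length = 2 * t + 1 ∧ ∀ v ∈ P.support, v ∈ X ∪ Y := by
  obtain ⟨y', hy'⟩ : Y.Nonempty := card_pos.1 (by omega)
  induction t generalizing X Y x y' with
  | zero =>
    refine ⟨y', hy', (h hx hy').toWalk, by simp [(h hx hy').ne], rfl, ?_⟩
    simp [hx, hy']
  | succ t ih =>
    obtain ⟨x', hx'⟩ : (X.erase x).Nonempty :=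
      card_pos.1 (by rw [card_erase_of_mem hx]; omega)
    obtain ⟨y'', hy''⟩ : (Y.erase y').Nonempty :=
      card_pos.1 (by rw [card_erase_of_mem hy']; omega)
    obtain ⟨y, hy, P, hP, hlen, hsupp⟩ := ih (by rw [card_erase_of_mem hx]; omega)
      (by rw [card_erase_of_mem hy']; omega)
      (fun a ha b hb => h (mem_of_mem_erase ha) (mem_of_mem_erase hb)) hx' _ hy''
    have hy'P : y' ∉ P.support := fun hm => by
      rcases mem_union.1 (hsupp y' hm) with hm | hm
      · exact G.irrefl (h (mem_of_mem_erase hm) hy')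
      · exact notMem_erase y' Y hm
    have hxP : x ∉ P.support := fun hm => by
      rcases mem_union.1 (hsupp x hm) with hm | hm
      · exact notMem_erase x X hm
      · exact G.irrefl (h hx (mem_of_mem_erase hm))
    refine ⟨y, mem_of_mem_erase hy,
      .cons (h hx hy') (.cons (h (mem_of_mem_erase hx') hy').symm P),
      (hP.cons hy'P).cons ?_, by simp [hlen]; ring, ?_⟩
    · simp [(h hx hy').ne, hxP]
    · simp only [Walk.support_cons, List.mem_cons]
      rintro v (rfl | rfl | hv)
      · exact mem_union_left _ hx
      · exact mem_union_right _ hy'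
      · exact union_subset_union (erase_subset _ _) (erase_subset _ _) (hsupp v hv)

lemma Walk.IsPath.exists_embedding_zmod {G : SimpleGraph V} {p q : V} {P : G.Walk p q}
    (hP : P.IsPath) (u : ZMod (P.length + 1)) :
    ∃ φ : ZMod (P.length + 1) ↪ V,
      φ u = q ∧ φ (u + 1) = p ∧ ∀ a ≠ u, G.Adj (φ a) (φ (a + 1)) := by
  have hval (a : ZMod (P.length + 1)) : (a - (u + 1)).val ≤ P.length :=
    Nat.lt_succ_iff.1 (ZMod.val_lt _)
  refine ⟨⟨fun a => P.getVert (a - (u + 1)).val, fun a b hab => ?_⟩, ?_, ?_, fun a ha => ?_⟩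
  · exact sub_left_injective (ZMod.val_injective _ (hP.getVert_injOn (hval a) (hval b) hab))
  · change P.getVert _ = q
    rw [show u - (u + 1) = -1 by ring, ZMod.val_neg_one, P.getVert_length]
  · change P.getVert _ = p
    rw [sub_self, ZMod.val_zero, P.getVert_zero]
  change G.Adj (P.getVert _) (P.getVert _)
  have hlt : (a - (u + 1)).val < P.length := by
    refine (hval a).lt_of_ne fun h => ha ?_
    have : a - (u + 1) = -1 := ZMod.val_injective _ (by rw [h, ZMod.val_neg_one])
    linear_combination this
  have hsucc : (a + 1 - (u + 1)).val = (a - (u + 1)).val + 1 := by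
    rw [show a + 1 - (u + 1) = a - (u + 1) + 1 by ring, ZMod.val_add_of_lt] <;>
      rw [ZMod.val_one_eq_one_mod, Nat.mod_eq_of_lt (by omega)]
    omega
  exact hsucc ▸ P.adj_getVert_succ hlt

variable (G : SimpleGraph V)

lemma exists_adj_isPath_of_isContained {t : ℕ}
    (hG : completeBipartiteGraph (Fin (t + 1)) (Fin (t + 1)) ⊑ G) :
    ∃ p q, G.Adj q p ∧ ∃ P : G.Walk p q, P.IsPath ∧ P.length = 2 * t + 1 := by
  classical
  obtain ⟨X, Y, hX, hY, h⟩ := completeBipartiteGraph_isContained_iff.1 hG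
  obtain ⟨x, hx⟩ : X.Nonempty := card_pos.1 (by simp [hX])
  obtain ⟨y, hy, P, hP, hlen, -⟩ := h.exists_isPath t (by simpa using hX) (by simpa using hY) hx
  exact ⟨x, y, (h hx hy).symm, P, hP, hlen⟩

lemma completeBipartiteGraph_free_sdiff_pathLinked (t : ℕ) :
    (completeBipartiteGraph (Fin (t + 1)) (Fin (t + 1))).Free (G \ G.pathLinked (2 * t + 1)) :=
  fun hK => by
    obtain ⟨p, q, hqp, P, hP, hlen⟩ := exists_adj_isPath_of_isContained _ hK
    exact hqp.2 ⟨hqp.ne, (P.mapLe sdiff_le).reverse, (hP.mapLe sdiff_le).reverse,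
      by simp [hlen]⟩

lemma ncard_edgeSet [Fintype G.edgeSet] : G.edgeSet.ncard = #G.edgeFinset := by
  rw [← coe_edgeFinset, ncard_coe_finset]

lemma ncard_edgeSet_sup_add_ncard_edgeSet_inf [Finite V] (H : SimpleGraph V) :
    (G ⊔ H).edgeSet.ncard + (G ⊓ H).edgeSet.ncard = G.edgeSet.ncard + H.edgeSet.ncard := by
  rw [edgeSet_sup, edgeSet_inf, Set.ncard_union_add_ncard_inter _ _ (toFinite _) (toFinite _)]

section Fintype

variable [Fintype V]

lemma ncard_edgeSet_le_choose_two : G.edgeSet.ncard ≤ (Fintype.card V).choose 2 := by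
  classical
  exact (ncard_edgeSet G).trans_le card_edgeFinset_le_card_choose_two

lemma sum_degrees_eq_two_mul_ncard_edgeSet [DecidableRel G.Adj] :
    ∑ v, G.degree v = 2 * G.edgeSet.ncard := by
  rw [sum_degrees_eq_twice_card_edges, ncard_edgeSet]

lemma le_card_filter_le_degree [DecidableRel G.Adj] [Nonempty V] {D M : ℕ}
    (h : Fintype.card V * D + Fintype.card V * M ≤ ∑ v, G.degree v) :
    M ≤ #{v | D ≤ G.degree v} := by
  have hhigh :
      ∑ v ∈ {v | D ≤ G.degree v}, G.degree v ≤ #{v | D ≤ G.degree v} * Fintype.card V :=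
    sum_le_card_nsmul _ _ _ fun v _ => (G.degree_lt_card_verts v).le
  have hlow : ∑ v ∈ {v | ¬D ≤ G.degree v}, G.degree v ≤ Fintype.card V * D := calc
    _ ≤ #{v | ¬D ≤ G.degree v} * D := sum_le_card_nsmul _ _ _ fun v hv => by simp at hv; omega
    _ ≤ Fintype.card V * D := Nat.mul_le_mul_right _ (card_le_univ _)
  rw [← sum_filter_add_sum_filter_not univ (fun v => D ≤ G.degree v)] at h
  refine Nat.le_of_mul_le_mul_left ?_ (Fintype.card_pos (α := V))
  linarith [mul_comm #{v | D ≤ G.degree v} (Fintype.card V)]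

lemma completeBipartiteGraph_isContained_of_sum_choose [DecidableEq V] [DecidableRel G.Adj]
    {t : ℕ} (h : (t - 1) * (Fintype.card V).choose t < ∑ v, (G.degree v).choose t) :
    completeBipartiteGraph (Fin t) (Fin t) ⊑ G := by
  have hcount : ∑ v, (G.degree v).choose t =
      ∑ T ∈ univ.powersetCard t, #{v | T ⊆ G.neighborFinset v} := calc
    _ = ∑ v, #((univ.powersetCard t).bipartiteAbove (fun v T => T ⊆ G.neighborFinset v) v) := by
        refine sum_congr rfl fun v _ => ?_
        rw [← card_neighborFinset_eq_degree, ← card_powersetCard]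
        congr 1
        ext T
        simp [bipartiteAbove, mem_powersetCard, and_comm]
    _ = _ := sum_card_bipartiteAbove_eq_sum_card_bipartiteBelow _
  obtain ⟨T, hT, hlt⟩ := exists_lt_of_sum_lt (s := univ.powersetCard t) (f := fun _ => t - 1)
    (by simpa [hcount, mul_comm] using h)
  obtain ⟨Y, hY, hYc⟩ :=
    exists_subset_card_eq (show t ≤ #{v | T ⊆ G.neighborFinset v} by omega)
  refine completeBipartiteGraph_isContained_iff.2
    ⟨T, Y, by simpa using (mem_powersetCard.1 hT).2, by simpa, fun x hx y hy => ?_⟩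
  exact ((mem_neighborFinset _ _ _).1 ((mem_filter.1 (hY hy)).2 hx)).symm

lemma completeBipartiteGraph_isContained_of_ncard_edgeSet [Nonempty V] {t D : ℕ}
    (hD : (t - 1) * (Fintype.card V).choose t < D * D.choose t)
    (hG : Fintype.card V * D ≤ G.edgeSet.ncard) :
    completeBipartiteGraph (Fin t) (Fin t) ⊑ G := by
  classical
  refine G.completeBipartiteGraph_isContained_of_sum_choose ?_
  have hA := G.le_card_filter_le_degree (D := D) (M := D)
    (by rw [sum_degrees_eq_two_mul_ncard_edgeSet]; omega)
  calc (t - 1) * _ < D * D.choose t := hD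
    _ ≤ #{v | D ≤ G.degree v} * D.choose t := Nat.mul_le_mul_right _ hA
    _ ≤ ∑ v ∈ {v | D ≤ G.degree v}, (G.degree v).choose t :=
        card_nsmul_le_sum _ _ _ fun v hv => Nat.choose_le_choose t (mem_filter.1 hv).2
    _ ≤ ∑ v, (G.degree v).choose t := sum_le_sum_of_subset (subset_univ _)

lemma sum_degree_le_sum_sup_degree [DecidableRel G.Adj] :
    ∑ v, G.degree v ≤ ∑ v, (G.neighborFinset v).sup (G.degree ·) := by
  set d : V → ℝ := fun v => G.degree v
  have hpos : ∀ v, ∀ w ∈ G.neighborFinset v, 0 < d v := fun v w hw => by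
    simpa [d] using G.degree_pos_iff_exists_adj v |>.2 ⟨w, (G.mem_neighborFinset v w).1 hw⟩
  have hswap : ∑ v, ∑ w ∈ G.neighborFinset v, d w / d v =
      ∑ v, ∑ w ∈ G.neighborFinset v, d v / d w :=
    sum_comm' fun v w => by simp [adj_comm]
  -- symmetrising the sum, each edge contributes `d w / d v + d v / d w ≥ 2`
  have hsum : ∑ v, d v ≤ ∑ v, ∑ w ∈ G.neighborFinset v, d w / d v := by
    have h2 : ∑ v, ∑ w ∈ G.neighborFinset v, (2 : ℝ) ≤
        ∑ v, ∑ w ∈ G.neighborFinset v, (d w / d v + d v / d w) := by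
      refine sum_le_sum fun v _ => sum_le_sum fun w hw => ?_
      have hv := hpos v w hw
      have hw := hpos w v (by simpa [adj_comm] using hw)
      rw [div_add_div _ _ hv.ne' hw.ne', le_div_iff₀ (by positivity)]
      nlinarith [sq_nonneg (d w - d v)]
    simp only [sum_add_distrib, ← hswap, sum_const, card_neighborFinset_eq_degree,
      nsmul_eq_mul] at h2
    rw [← sum_mul] at h2
    change (∑ v, d v) * 2 ≤ _ at h2
    linarith
  have havg (v : V) :
      ∑ w ∈ G.neighborFinset v, d w / d v ≤ (((G.neighborFinset v).sup (G.degree ·) : ℕ) : ℝ) := by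
    rcases (G.neighborFinset v).eq_empty_or_nonempty with h | ⟨w, hw⟩
    · simp [h]
    rw [← sum_div, div_le_iff₀ (hpos v w hw)]
    calc ∑ w ∈ G.neighborFinset v, d w
        ≤ ∑ _w ∈ G.neighborFinset v, (((G.neighborFinset v).sup (G.degree ·) : ℕ) : ℝ) :=
          sum_le_sum fun w hw => by
            simp only [d]
            exact_mod_cast le_sup (f := (G.degree ·)) hw
      _ = _ := by simp [d, card_neighborFinset_eq_degree, mul_comm]
  have key := hsum.trans (sum_le_sum fun v _ => havg v)
  simp only [d] at key
  exact_mod_cast key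

lemma degree_le_degree_pathLinked_add [DecidableEq V] [DecidableRel G.Adj] {v w : V}
    {P : G.Walk v w} (hP : P.IsPath) :
    G.degree w ≤ (G.pathLinked (P.length + 1)).degree v + (P.length + 1) := by
  have hsub : G.neighborFinset w \ P.support.toFinset ⊆
      (G.pathLinked (P.length + 1)).neighborFinset v := by
    intro z hz
    rw [Finset.mem_sdiff, mem_neighborFinset, List.mem_toFinset] at hz
    exact (mem_neighborFinset ..).2 ⟨fun h => hz.2 (h ▸ P.start_mem_support), P.concat hz.1,
      hP.concat hz.2 hz.1, P.length_concat _⟩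
  rw [← card_neighborFinset_eq_degree, ← card_neighborFinset_eq_degree]
  calc _ ≤ #(G.neighborFinset w \ P.support.toFinset) + #P.support.toFinset :=
        card_le_card_sdiff_add_card
    _ ≤ _ :=
        add_le_add (card_le_card hsub) ((List.toFinset_card_le _).trans_eq P.length_support)

lemma two_mul_ncard_edgeSet_inf_pathLinked_le (L : ℕ) :
    2 * (G ⊓ G.pathLinked L).edgeSet.ncard ≤
      2 * (G.pathLinked (L + 1)).edgeSet.ncard + (L + 1) * Fintype.card V := by
  classical
  rw [← sum_degrees_eq_two_mul_ncard_edgeSet, ← sum_degrees_eq_two_mul_ncard_edgeSet]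
  calc ∑ v, (G ⊓ G.pathLinked L).degree v
      ≤ ∑ v, ((G ⊓ G.pathLinked L).neighborFinset v).sup ((G ⊓ G.pathLinked L).degree ·) :=
        sum_degree_le_sum_sup_degree _
    _ ≤ ∑ v, ((G.pathLinked (L + 1)).degree v + (L + 1)) := by
        refine sum_le_sum fun v _ => Finset.sup_le fun w hw => ?_
        obtain ⟨-, -, P, hP, rfl⟩ := (mem_neighborFinset _ _ _).1 hw
        exact (degree_le_of_le inf_le_left).trans (G.degree_le_degree_pathLinked_add hP)
    _ = _ := by simp [sum_add_distrib, mul_comm]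

lemma ncard_edgeSet_le_ncard_edgeSet_pathLinked_add [Nonempty V] {t D : ℕ}
    (hD : t * (Fintype.card V).choose (t + 1) < D * D.choose (t + 1)) :
    G.edgeSet.ncard ≤ (G.pathLinked (2 * t + 2)).edgeSet.ncard + (t + 1) * Fintype.card V +
      Fintype.card V * D := by
  have hsparse : (G \ G.pathLinked (2 * t + 1)).edgeSet.ncard < Fintype.card V * D := by
    by_contra! h
    exact G.completeBipartiteGraph_free_sdiff_pathLinked t
      (completeBipartiteGraph_isContained_of_ncard_edgeSet _ (by simpa using hD) h)
  have hdense : 2 * _ ≤ 2 * (G.pathLinked (2 * t + 2)).edgeSet.ncard + _ :=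
    G.two_mul_ncard_edgeSet_inf_pathLinked_le (2 * t + 1)
  have hsplit : (G ⊓ G.pathLinked (2 * t + 1)).edgeSet.ncard +
      (G \ G.pathLinked (2 * t + 1)).edgeSet.ncard = G.edgeSet.ncard := by
    rw [edgeSet_inf, edgeSet_sdiff, Set.ncard_inter_add_ncard_sdiff_eq_ncard _ _ (toFinite _)]
  have : (2 * t + 1 + 1) * Fintype.card V = 2 * ((t + 1) * Fintype.card V) := by ring
  omega

lemma exists_adj_sup_pathLinked_inf [Nonempty V] (X Y : SimpleGraph V) {t D : ℕ}
    (hD : t * (Fintype.card V).choose (t + 1) < D * D.choose (t + 1))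
    (h : (Fintype.card V).choose 2 + (t + 1) * Fintype.card V + Fintype.card V * D <
      X.edgeSet.ncard + Y.edgeSet.ncard) :
    ∃ p q, (X ⊔ Y).Adj p q ∧ ((X ⊓ Y).pathLinked (2 * t + 2)).Adj p q := by
  by_contra! hno
  have hdisj : Disjoint ((X ⊓ Y).pathLinked (2 * t + 2)) (X ⊔ Y) :=
    disjoint_iff_inf_le.2 fun p q h => (hno p q h.2 h.1).elim
  have hcompl : ((X ⊓ Y).pathLinked (2 * t + 2)).edgeSet.ncard + (X ⊔ Y).edgeSet.ncard ≤
      (Fintype.card V).choose 2 := by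
    rw [← Set.ncard_union_eq (disjoint_edgeSet.2 hdisj) (toFinite _) (toFinite _), ← edgeSet_sup]
    exact ncard_edgeSet_le_choose_two _
  have hsupinf := X.ncard_edgeSet_sup_add_ncard_edgeSet_inf Y
  have := (X ⊓ Y).ncard_edgeSet_le_ncard_edgeSet_pathLinked_add hD
  omega

end Fintype

end SimpleGraph

open Nat in
lemma sub_one_mul_choose_lt_mul_choose {n c D t : ℕ} (hn : n ≤ c * (D + 1 - t)) (htD : t ≤ D)
    (hD : (t - 1) * c ^ t < D) : (t - 1) * n.choose t < D * D.choose t := by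
  refine Nat.lt_of_mul_lt_mul_right (a := t !) ?_
  calc (t - 1) * n.choose t * t ! = (t - 1) * n.descFactorial t := by
        rw [descFactorial_eq_factorial_mul_choose]; ring
    _ ≤ (t - 1) * (c * (D + 1 - t)) ^ t :=
        Nat.mul_le_mul_left _ ((descFactorial_le_pow n t).trans (Nat.pow_le_pow_left hn t))
    _ = (t - 1) * c ^ t * (D + 1 - t) ^ t := by ring
    _ < D * (D + 1 - t) ^ t := Nat.mul_lt_mul_of_pos_right hD (Nat.pow_pos (by omega))
    _ ≤ D * D.descFactorial t := Nat.mul_le_mul_left _ (pow_sub_le_descFactorial D t)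
    _ = D * D.choose t * t ! := by rw [descFactorial_eq_factorial_mul_choose]; ring

open Filter in
lemma eventually_exists_sub_one_mul_choose_lt (t : ℕ) {ε : ℝ} (hε : 0 < ε) :
    ∀ᶠ n : ℕ in atTop, ∃ D : ℕ,
      (t - 1) * n.choose t < D * D.choose t ∧ (t + D : ℝ) < ε * (n - 1) := by
  obtain ⟨K, hK⟩ := exists_nat_gt (2 / ε)
  have hεK : 2 < ε * K := by rwa [div_lt_iff₀ hε, mul_comm] at hK
  have hKpos : 0 < K := by exact_mod_cast (div_pos two_pos hε).trans hK
  filter_upwards [tendsto_natCast_atTop_atTop.eventually_gt_atTop (2 * (t + ε) / ε),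
    eventually_ge_atTop (K * ((t - 1) * (2 * K) ^ t + 2 * t + 1))] with n hnε hnK
  have hD : (t - 1) * (2 * K) ^ t + 2 * t + 1 ≤ n / K :=
    (Nat.le_div_iff_mul_le hKpos).2 (by linarith)
  refine ⟨n / K, sub_one_mul_choose_lt_mul_choose (c := 2 * K) ?_ (by omega) (by omega), ?_⟩
  · calc n ≤ K * (n / K + 1) := (Nat.lt_mul_div_succ n hKpos).le
      _ ≤ K * (2 * (n / K + 1 - t)) := Nat.mul_le_mul_left _ (by omega)
      _ = 2 * K * (n / K + 1 - t) := by ring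
  · have hn : 0 < (n : ℝ) := lt_of_le_of_lt (by positivity) hnε
    have hdiv : ((n / K : ℕ) : ℝ) ≤ n / K := Nat.cast_div_le
    rw [div_lt_iff₀ hε] at hnε
    have : (n : ℝ) / K < ε * n / 2 := by
      rw [div_lt_iff₀ (by exact_mod_cast hKpos)]
      nlinarith
    linarith

lemma choose_two_add_lt_two_mul_of_density {n e s D : ℕ} {ε : ℝ} (hn : 0 < n)
    (hD : (s + D : ℝ) < ε * (n - 1)) (he : (1 / 2 + ε) * (n * (n - 1) / 2) ≤ (e : ℝ)) :
    n.choose 2 + s * n + n * D < 2 * e := by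
  have hn' : (0 : ℝ) < n := by exact_mod_cast hn
  have : (n.choose 2 + s * n + n * D : ℝ) < 2 * e := by
    rw [Nat.cast_choose_two]
    nlinarith
  exact_mod_cast this

section BicoloredCycle

variable {ℓ : ℕ} {W : Type*}

def IsBicolorContained {U : Type*} (CR CB : SimpleGraph U) (R B : SimpleGraph W) : Prop :=
  ∃ φ : U ↪ W,
    (∀ u v, CR.Adj u v → R.Adj (φ u) (φ v)) ∧ (∀ u v, CB.Adj u v → B.Adj (φ u) (φ v))

lemma cycleG_adj {u v : ZMod ℓ} : (cycleG ℓ).Adj u v ↔ u ≠ v ∧ (v = u + 1 ∨ u = v + 1) :=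
  fromRel_adj ..

lemma map_adj_of_le_cycleG {C : SimpleGraph (ZMod ℓ)} (hC : C ≤ cycleG ℓ) {H : SimpleGraph W}
    {φ : ZMod ℓ → W} (h : ∀ a, C.Adj a (a + 1) → H.Adj (φ a) (φ (a + 1))) {u v : ZMod ℓ}
    (huv : C.Adj u v) : H.Adj (φ u) (φ v) := by
  rcases (cycleG_adj.1 (hC huv)).2 with rfl | rfl
  · exact h u huv
  · exact (h v huv.symm).symm

lemma exists_adj_add_one_of_le_cycleG {C : SimpleGraph (ZMod ℓ)} (hC : C ≤ cycleG ℓ)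
    (hne : C ≠ ⊥) : ∃ u, C.Adj u (u + 1) := by
  obtain ⟨u, v, huv⟩ := ne_bot_iff_exists_adj.1 hne
  rcases (cycleG_adj.1 (hC huv)).2 with rfl | rfl
  · exact ⟨u, huv⟩
  · exact ⟨v, huv.symm⟩

variable {CR CB : SimpleGraph (ZMod ℓ)} {R B : SimpleGraph W}

lemma isBicolorContained_of_isPath (hunion : CR ⊔ CB = cycleG ℓ) {p q : W}
    {P : (R ⊓ B).Walk p q} (hP : P.IsPath) (hlen : P.length + 1 = ℓ) (u : ZMod ℓ)
    (hR : CR.Adj u (u + 1) → R.Adj q p) (hB : CB.Adj u (u + 1) → B.Adj q p) :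
    IsBicolorContained CR CB R B := by
  subst hlen
  obtain ⟨φ, hu, hu1, hstep⟩ := hP.exists_embedding_zmod u
  have hmap (C : SimpleGraph (ZMod (P.length + 1))) (hC : C ≤ cycleG _) (H : SimpleGraph W)
      (hH : R ⊓ B ≤ H) (hclose : C.Adj u (u + 1) → H.Adj q p) (a b) (hab : C.Adj a b) :
      H.Adj (φ a) (φ b) := by
    refine map_adj_of_le_cycleG hC (fun a ha => ?_) hab
    by_cases hau : a = u
    · subst hau
      rw [hu, hu1]
      exact hclose ha
    · exact hH (hstep a hau)
  exact ⟨φ, hmap CR (hunion ▸ le_sup_left) R inf_le_left hR,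
    hmap CB (hunion ▸ le_sup_right) B inf_le_right hB⟩

variable [Fintype W] [Nonempty W] {t D : ℕ}

lemma isBicolorContained_of_even (hunion : CR ⊔ CB = cycleG ℓ) (hℓ : ℓ = 2 * t + 2)
    (hD : t * (Fintype.card W).choose (t + 1) < D * D.choose (t + 1))
    (hR : (Fintype.card W).choose 2 + (t + 1) * Fintype.card W + Fintype.card W * D <
      2 * R.edgeSet.ncard)
    (hB : (Fintype.card W).choose 2 + (t + 1) * Fintype.card W + Fintype.card W * D <
      2 * B.edgeSet.ncard) :
    IsBicolorContained CR CB R B := by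
  have hRB : Fintype.card W * D ≤ (R ⊓ B).edgeSet.ncard := by
    have := R.ncard_edgeSet_sup_add_ncard_edgeSet_inf B
    have := (R ⊔ B).ncard_edgeSet_le_choose_two
    omega
  obtain ⟨p, q, hqp, P, hP, hlen⟩ := (R ⊓ B).exists_adj_isPath_of_isContained
    ((R ⊓ B).completeBipartiteGraph_isContained_of_ncard_edgeSet (by simpa using hD) hRB)
  exact isBicolorContained_of_isPath hunion hP (by omega) 0 (fun _ => hqp.1) (fun _ => hqp.2)

lemma isBicolorContained_of_odd (hdisj : ∀ u v, ¬(CR.Adj u v ∧ CB.Adj u v))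
    (hunion : CR ⊔ CB = cycleG ℓ) (hℓ : ℓ = 2 * t + 3)
    (hD : t * (Fintype.card W).choose (t + 1) < D * D.choose (t + 1))
    (hR : (Fintype.card W).choose 2 + (t + 1) * Fintype.card W + Fintype.card W * D <
      2 * R.edgeSet.ncard)
    (hB : (Fintype.card W).choose 2 + (t + 1) * Fintype.card W + Fintype.card W * D <
      2 * B.edgeSet.ncard) :
    IsBicolorContained CR CB R B := by
  -- a monochromatic cycle only needs a path in `R ⊓ R = R` (resp. `B`) closed by an edge of it
  by_cases hCB : CB = ⊥
  · obtain ⟨p, q, hpq, -, P, hP, hlen⟩ := exists_adj_sup_pathLinked_inf R R hD (by omega)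
    obtain ⟨φ, hφ, -⟩ := isBicolorContained_of_isPath (B := R) hunion hP (by omega) 0
      (fun _ => (hpq.elim id id).symm) (fun _ => (hpq.elim id id).symm)
    exact ⟨φ, hφ, fun u v h => by simp [hCB] at h⟩
  by_cases hCR : CR = ⊥
  · obtain ⟨p, q, hpq, -, P, hP, hlen⟩ := exists_adj_sup_pathLinked_inf B B hD (by omega)
    obtain ⟨φ, -, hφ⟩ := isBicolorContained_of_isPath (R := B) hunion hP (by omega) 0
      (fun _ => (hpq.elim id id).symm) (fun _ => (hpq.elim id id).symm)
    exact ⟨φ, fun u v h => by simp [hCR] at h, hφ⟩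
  obtain ⟨p, q, hpq | hpq, -, P, hP, hlen⟩ := exists_adj_sup_pathLinked_inf R B hD (by omega)
  · obtain ⟨u, hu⟩ := exists_adj_add_one_of_le_cycleG (hunion ▸ le_sup_left) hCR
    exact isBicolorContained_of_isPath hunion hP (by omega) u (fun _ => hpq.symm)
      (fun h => (hdisj u (u + 1) ⟨hu, h⟩).elim)
  · obtain ⟨u, hu⟩ := exists_adj_add_one_of_le_cycleG (hunion ▸ le_sup_right) hCB
    exact isBicolorContained_of_isPath hunion hP (by omega) u
      (fun h => (hdisj u (u + 1) ⟨h, hu⟩).elim) (fun _ => hpq.symm)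

end BicoloredCycle

/-- Theorem 1.2: for any bicolored cycle `(CR, CB)` of length `ℓ ≥ 3`, if both `R` and `B`
have density at least `1/2 + ε`, then the bicolored cycle embeds in the colored union. -/
theorem mex_bicolored_cycle (ℓ : ℕ) (hℓ : 3 ≤ ℓ)
    (CR CB : SimpleGraph (ZMod ℓ))
    (hdisj : ∀ u v, ¬(CR.Adj u v ∧ CB.Adj u v))
    (hunion : CR ⊔ CB = cycleG ℓ)
    (ε : ℝ) (hε : 0 < ε) :
    ∃ n₀ : ℕ, ∀ n ≥ n₀, ∀ (W : Type) [Fintype W], Fintype.card W = n →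
      ∀ R B : SimpleGraph W,
        (1/2 + ε) * (n*(n-1)/2) ≤ (R.edgeSet.ncard : ℝ) →
        (1/2 + ε) * (n*(n-1)/2) ≤ (B.edgeSet.ncard : ℝ) →
        ∃ φ : ZMod ℓ ↪ W,
          (∀ u v, CR.Adj u v → R.Adj (φ u) (φ v)) ∧
          (∀ u v, CB.Adj u v → B.Adj (φ u) (φ v)) := by
  obtain ⟨t, hℓt⟩ : ∃ t, ℓ = 2 * t + 2 ∨ ℓ = 2 * t + 3 := ⟨(ℓ - 2) / 2, by omega⟩
  obtain ⟨n₀, hn₀⟩ :=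
    Filter.eventually_atTop.1 (eventually_exists_sub_one_mul_choose_lt (t + 1) hε)
  refine ⟨n₀ + 1, fun n hn W _ hW R B hR hB => ?_⟩
  obtain ⟨D, hD, hDε⟩ := hn₀ n (by omega)
  have : Nonempty W := Fintype.card_pos_iff.1 (by omega)
  subst hW
  have hR' := choose_two_add_lt_two_mul_of_density (s := t + 1) Fintype.card_pos
    (by exact_mod_cast hDε) hR
  have hB' := choose_two_add_lt_two_mul_of_density (s := t + 1) Fintype.card_pos
    (by exact_mod_cast hDε) hB
  rcases hℓt with hℓ | hℓ
  · exact isBicolorContained_of_even hunion hℓ (by simpa using hD) hR' hB'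
  · exact isBicolorContained_of_odd hdisj hunion hℓ (by simpa using hD) hR' hB'
end

section
/- Let R and B be simple graphs on a common vertex set of size n such that the pair (R, B) contains neither T1 nor T2. Then e(R) + e(B) ≤ n²/2. -/
open SimpleGraph Set

/-- The pair `(R, B)` contains `T1`: a triangle `x, y, z` in which the edge `{x,y}` is both
red and blue and the edges `{x,z}`, `{y,z}` are red. (Distinctness of `x, y, z` follows from
adjacency in a simple graph.) -/
def ContainsT1 {V : Type*} (R B : SimpleGraph V) : Prop :=
  ∃ x y z : V, R.Adj x y ∧ B.Adj x y ∧ R.Adj x z ∧ R.Adj y z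

/-- The pair `(R, B)` contains `T2`: a triangle `x, y, z` in which the edge `{x,y}` is both
red and blue, the edge `{x,z}` is red and the edge `{y,z}` is blue. -/
def ContainsT2 {V : Type*} (R B : SimpleGraph V) : Prop :=
  ∃ x y z : V, R.Adj x y ∧ B.Adj x y ∧ R.Adj x z ∧ B.Adj y z

/-!
Record the pair as a symmetric weight `w x y = [x ~_R y] + [x ~_B y]`, so that
`∑ x, ∑ y, w x y = 2 (e(R) + e(B))`. Forbidding `T1` and `T2` forces `w x z + w y z ≤ 2`
whenever `w x y = 2`. Such a weight sums to at most `|s|²` over `s × s`: if no pair has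
weight `2` this is trivial, and otherwise deleting a pair of weight `2` from `s` removes at
most `4 + 4 (|s| - 2) = |s|² - (|s| - 2)²`.
-/

open Finset

section Weight

variable {V : Type*} [DecidableEq V] {w : V → V → ℕ}

lemma sum_sum_insert_of_symm (hw : ∀ x y, w x y = w y x) {a : V} {t : Finset V} (ha : a ∉ t) :
    ∑ x ∈ insert a t, ∑ y ∈ insert a t, w x y =
      ∑ x ∈ t, ∑ y ∈ t, w x y + 2 * ∑ z ∈ t, w a z + w a a := by
  have hcol : ∑ x ∈ t, w x a = ∑ z ∈ t, w a z := sum_congr rfl fun x _ => hw x a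
  simp only [sum_insert ha, sum_add_distrib, hcol]
  ring

lemma sum_sum_le_card_sq (hw : ∀ x y, w x y = w y x)
    (hheavy : ∀ x y, 1 < w x y → ∀ z, w x z + w y z ≤ 2) (s : Finset V) :
    ∑ x ∈ s, ∑ y ∈ s, w x y ≤ #s ^ 2 := by
  induction s using Finset.strongInduction with
  | _ s ih =>
    by_cases hs : ∃ x ∈ s, ∃ y ∈ s, 1 < w x y
    · obtain ⟨x, hx, y, hy, hxy⟩ := hs
      have hne : x ≠ y := by
        rintro rfl
        have := hheavy x x hxy x
        omega
      set u := (s.erase x).erase y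
      have hyu : y ∉ u := notMem_erase y _
      have hxu : x ∉ insert y u := by simp [u, hne]
      have hsu : s = insert x (insert y u) := by
        rw [insert_erase (mem_erase.2 ⟨hne.symm, hy⟩), insert_erase hx]
      have hcard : #s = #u + 2 := by rw [hsu, card_insert_of_notMem hxu, card_insert_of_notMem hyu]
      have hz : ∑ z ∈ u, (w x z + w y z) ≤ 2 * #u := by
        simpa [mul_comm] using sum_le_sum fun z (_ : z ∈ u) => hheavy x y hxy z
      have hxx := hheavy x y hxy x
      have hyy := hheavy x y hxy y
      have ihu := ih u (hsu ▸ (Finset.ssubset_insert hyu).trans (Finset.ssubset_insert hxu))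
      rw [hsu, sum_sum_insert_of_symm hw hxu, sum_sum_insert_of_symm hw hyu, sum_insert hyu,
        ← hsu, hcard]
      rw [sum_add_distrib] at hz
      rw [hw y x] at hxx
      nlinarith
    · push Not at hs
      calc ∑ x ∈ s, ∑ y ∈ s, w x y ≤ ∑ _x ∈ s, ∑ _y ∈ s, 1 :=
            sum_le_sum fun x hx => sum_le_sum fun y hy => hs x hx y hy
        _ = #s ^ 2 := by simp [sq]

end Weight

section ColorMultiplicity

variable {V : Type*} (R B : SimpleGraph V) [DecidableRel R.Adj] [DecidableRel B.Adj]

def colorMultiplicity (x y : V) : ℕ :=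
  (if R.Adj x y then 1 else 0) + (if B.Adj x y then 1 else 0)

lemma colorMultiplicity_comm (x y : V) :
    colorMultiplicity R B x y = colorMultiplicity R B y x := by
  simp only [colorMultiplicity, R.adj_comm, B.adj_comm]

variable {R B}

lemma colorMultiplicity_add_le_two (h1 : ¬ ContainsT1 R B) (h2 : ¬ ContainsT2 R B) {x y : V}
    (hxy : 1 < colorMultiplicity R B x y) (z : V) :
    colorMultiplicity R B x z + colorMultiplicity R B y z ≤ 2 := by
  obtain ⟨hR, hB⟩ : R.Adj x y ∧ B.Adj x y := by
    unfold colorMultiplicity at hxy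
    split_ifs at hxy <;> simp_all
  have n1 : ¬(R.Adj x z ∧ R.Adj y z) := fun ⟨a, b⟩ => h1 ⟨x, y, z, hR, hB, a, b⟩
  have n2 : ¬(R.Adj x z ∧ B.Adj y z) := fun ⟨a, b⟩ => h2 ⟨x, y, z, hR, hB, a, b⟩
  have n3 : ¬(R.Adj y z ∧ B.Adj x z) := fun ⟨a, b⟩ => h2 ⟨y, x, z, hR.symm, hB.symm, a, b⟩
  unfold colorMultiplicity
  split_ifs <;> first | omega | tauto

variable (R B)

lemma sum_sum_colorMultiplicity [Fintype V] :
    ∑ x, ∑ y, colorMultiplicity R B x y = 2 * (#R.edgeFinset + #B.edgeFinset) := by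
  simp only [colorMultiplicity, sum_add_distrib, sum_boole, Nat.cast_id,
    ← neighborFinset_eq_filter, card_neighborFinset_eq_degree, sum_degrees_eq_twice_card_edges]
  ring

end ColorMultiplicity

/-- Claim 5.1: if the bicolored graph `(R, B)` on `n` vertices contains neither `T1` nor
`T2`, then `e(R) + e(B) ≤ n²/2` (edges in both colors counted twice). -/
theorem T1_T2_free_edge_bound {V : Type} [Fintype V] {n : ℕ} (hV : Fintype.card V = n)
    (R B : SimpleGraph V) (h1 : ¬ ContainsT1 R B) (h2 : ¬ ContainsT2 R B) :
    ((R.edgeSet.ncard : ℝ) + (B.edgeSet.ncard : ℝ)) ≤ (n : ℝ)^2/2 := by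
  classical
  have hsum : 2 * (#R.edgeFinset + #B.edgeFinset) ≤ n ^ 2 := by
    rw [← sum_sum_colorMultiplicity, ← hV, ← card_univ]
    exact sum_sum_le_card_sq (colorMultiplicity_comm R B)
      (fun _ _ hxy => colorMultiplicity_add_le_two h1 h2 hxy) univ
  rw [← coe_edgeFinset R, ← coe_edgeFinset B, ncard_coe_finset, ncard_coe_finset]
  have : (2 * (#R.edgeFinset + #B.edgeFinset) : ℝ) ≤ n ^ 2 := by exact_mod_cast hsum
  linarith
end

section
/- Let R and B be simple graphs on a common vertex set of size n such that the pair (R, B) contains neither T1 nor T2. Then min(e(R), e(B)) ≤ n²/4. -/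
open SimpleGraph Set

/-! A purple edge `xy` (red and blue) of a `T2`-free pair forces `N_R(x) ∩ N_B(y) = ∅`, so
`d_R(x) + d_B(y) ≤ n` and symmetrically `d_B(x) + d_R(y) ≤ n`. Deleting `x` and `y` thus removes
at most `2n - 2` red and blue edges, exactly the difference between `n²/2` and `(n - 2)²/2`; if
there is no purple edge, `R ⊔ B` is a simple graph with `e(R) + e(B)` edges. By induction on `n`,
`e(R) + e(B) ≤ n²/2`, so the smaller colour class has at most `n²/4` edges. -/

open Finset

theorem ContainsT2.of_comap {V W : Type*} {R B : SimpleGraph V} {f : W → V}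
    (h : ContainsT2 (R.comap f) (B.comap f)) : ContainsT2 R B :=
  let ⟨x, y, z, hxy, hxy', hxz, hyz⟩ := h
  ⟨f x, f y, f z, hxy, hxy', hxz, hyz⟩

namespace SimpleGraph

variable {V : Type*} [Fintype V]

theorem two_mul_card_edgeFinset_le_sq (G : SimpleGraph V) [Fintype G.edgeSet] :
    2 * #G.edgeFinset ≤ Fintype.card V ^ 2 :=
  calc 2 * #G.edgeFinset
      _ ≤ 2 * (Fintype.card V).choose 2 := by grw [card_edgeFinset_le_card_choose_two]
      _ ≤ Fintype.card V * (Fintype.card V - 1) := by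
        rw [Nat.choose_two_right]
        exact Nat.mul_div_le _ _
      _ ≤ Fintype.card V ^ 2 := by
        rw [sq]
        gcongr
        omega

variable [DecidableEq V]

theorem card_edgeFinset_add_one_eq_of_adj (G : SimpleGraph V) [DecidableRel G.Adj] {x y : V}
    (h : G.Adj x y) :
    #G.edgeFinset + 1 = #(G.induce ↑({x, y}ᶜ : Finset V)).edgeFinset + G.degree x + G.degree y := by
  have hinter : G.incidenceFinset x ∩ G.incidenceFinset y = {s(x, y)} := by
    rw [← coe_inj]
    push_cast
    exact G.incidenceSet_inter_incidenceSet_of_adj h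
  have hincident : {e ∈ G.edgeFinset | ¬e.toFinset ⊆ {x, y}ᶜ} =
      G.incidenceFinset x ∪ G.incidenceFinset y := by
    ext e
    simp only [Finset.mem_filter, Finset.mem_union, mem_incidenceFinset, incidenceSet,
      Set.mem_ofPred_eq, mem_edgeFinset, ← and_or_left, Finset.not_subset, Sym2.mem_toFinset,
      Finset.mem_compl, Finset.mem_insert, Finset.mem_singleton, not_not]
    grind
  rw [← card_filter_edgeFinset_toFinset_subset, ← card_incidenceFinset_eq_degree,
    ← card_incidenceFinset_eq_degree, add_assoc, ← card_union_add_card_inter, hinter, ← hincident,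
    Finset.card_singleton, ← add_assoc, card_filter_add_card_filter_not]

variable {R B : SimpleGraph V} [DecidableRel R.Adj] [DecidableRel B.Adj]

theorem degree_add_degree_le_of_not_containsT2 (h : ¬ContainsT2 R B) {x y : V} (hR : R.Adj x y)
    (hB : B.Adj x y) : R.degree x + B.degree y ≤ Fintype.card V := by
  have hdisj : Disjoint (R.neighborFinset x) (B.neighborFinset y) :=
    Finset.disjoint_left.2 fun z hxz hyz ↦
      h ⟨x, y, z, hR, hB, (mem_neighborFinset _ _ _).1 hxz, (mem_neighborFinset _ _ _).1 hyz⟩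
  rw [← card_neighborFinset_eq_degree, ← card_neighborFinset_eq_degree,
    ← card_union_of_disjoint hdisj]
  exact card_le_univ _

theorem two_mul_card_edgeFinset_add_le_of_disjoint (h : Disjoint R B) :
    2 * (#R.edgeFinset + #B.edgeFinset) ≤ Fintype.card V ^ 2 := by
  have := two_mul_card_edgeFinset_le_sq (R ⊔ B)
  rwa [edgeFinset_sup, card_union_of_disjoint (disjoint_edgeFinset.2 h)] at this

theorem two_mul_card_edgeFinset_add_le_of_not_containsT2 (h : ¬ContainsT2 R B) :
    2 * (#R.edgeFinset + #B.edgeFinset) ≤ Fintype.card V ^ 2 := by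
  induction hn : Fintype.card V using Nat.strong_induction_on generalizing V with
  | _ n ih =>
  by_cases hdisj : Disjoint R B
  · exact hn ▸ two_mul_card_edgeFinset_add_le_of_disjoint hdisj
  obtain ⟨x, y, hR, hB⟩ : ∃ x y, R.Adj x y ∧ B.Adj x y := by
    simpa [disjoint_left] using hdisj
  set s : Finset V := {x, y}ᶜ
  have hs : #s + 2 = n := by rw [← hn, ← card_pair hR.ne, card_compl_add_card]
  have hind := ih #s (by omega) (R := R.induce s) (B := B.induce s) (fun h' ↦ h h'.of_comap)
    (Fintype.card_coe s)
  have hRcount := card_edgeFinset_add_one_eq_of_adj R hR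
  have hBcount := card_edgeFinset_add_one_eq_of_adj B hB
  have hxy := degree_add_degree_le_of_not_containsT2 h hR hB
  have hyx := degree_add_degree_le_of_not_containsT2 h hR.symm hB.symm
  subst hn
  rw [← hs] at hxy hyx ⊢
  linarith

end SimpleGraph

theorem T1_T2_free_min_edge_bound_general {V : Type} [Fintype V] {n : ℕ} (hV : Fintype.card V = n)
    (R B : SimpleGraph V) (h2 : ¬ ContainsT2 R B) :
    min (R.edgeSet.ncard : ℝ) (B.edgeSet.ncard : ℝ) ≤ (n : ℝ)^2/4 := by
  classical
  have hsum : 2 * (R.edgeSet.ncard + B.edgeSet.ncard) ≤ n ^ 2 := by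
    rw [← coe_edgeFinset, ← coe_edgeFinset, Set.ncard_coe_finset, Set.ncard_coe_finset, ← hV]
    exact two_mul_card_edgeFinset_add_le_of_not_containsT2 h2
  have hsum' : 2 * ((R.edgeSet.ncard : ℝ) + B.edgeSet.ncard) ≤ (n : ℝ) ^ 2 := by exact_mod_cast hsum
  linarith [min_le_left (R.edgeSet.ncard : ℝ) B.edgeSet.ncard,
    min_le_right (R.edgeSet.ncard : ℝ) B.edgeSet.ncard]

/-- `mex({T1, T2}) ≤ 1/2`: if the bicolored graph `(R, B)` on `n` vertices contains neither
`T1` nor `T2`, then one of the color classes has at most `n²/4` edges. -/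
theorem T1_T2_free_min_edge_bound {V : Type} [Fintype V] {n : ℕ} (hV : Fintype.card V = n)
    (R B : SimpleGraph V) (h1 : ¬ ContainsT1 R B) (h2 : ¬ ContainsT2 R B) :
    min (R.edgeSet.ncard : ℝ) (B.edgeSet.ncard : ℝ) ≤ (n : ℝ)^2/4 :=
  T1_T2_free_min_edge_bound_general hV R B h2
end

section
/- For all integers r ≥ 2 and k ≥ 1 there exists t_0 such that for every t ≥ t_0 there is a coloring c : [t] × [t] → [r] with the following property: for all subsets X, Y ⊆ [t] with |X| ≥ t/(rk)^k and |Y| ≥ t/(rk)^k, and for every color i ∈ [r], there exist x ∈ X and y ∈ Y with c(x, y) = i. -/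
/-! A uniformly random colouring works. With `m = ⌈t / (rk)^k⌉` it suffices that every
`m × m` rectangle sees every colour. A fixed rectangle misses a fixed colour for a fraction
`((r-1)/r)^(m²)` of all colourings, and there are at most `4^t · r` rectangles and colours, so a
good colouring exists once `4^t · r · ((r-1)/r)^(m²) < 1`. As `t ≤ (rk)^k · m`, this follows
from the Bernoulli-type bound `(r/(r-1))^m ≥ m/(r-1)` for `m` large. -/

open Finset

section Coloring
variable {α β γ : Type*} [Fintype α] [DecidableEq α] [Fintype β] [DecidableEq β]
  [Fintype γ] [DecidableEq γ]

theorem card_filter_forall_mem_ne (S : Finset α) (i : γ) :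
    #{f : α → γ | ∀ a ∈ S, f a ≠ i} =
      (Fintype.card γ - 1) ^ #S * Fintype.card γ ^ (Fintype.card α - #S) := by
  have : ({f : α → γ | ∀ a ∈ S, f a ≠ i} : Finset _) =
      Fintype.piFinset fun a => if a ∈ S then ({i}ᶜ : Finset γ) else univ := by
    ext f
    simp only [mem_filter, mem_univ, true_and, Fintype.mem_piFinset]
    refine forall_congr' fun a => ?_
    split_ifs <;> simp [*]
  rw [this, Fintype.card_piFinset]
  simp only [apply_ite card, prod_ite, card_compl, card_singleton, card_univ, prod_const]
  rw [filter_univ_mem, filter_notMem_eq_sdiff, card_univ_sdiff]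

theorem exists_coloring_forall_rectangle_surjective [Nonempty γ] {m : ℕ}
    (hα : m ≤ Fintype.card α) (hβ : m ≤ Fintype.card β)
    (h : (Fintype.card α).choose m * (Fintype.card β).choose m * Fintype.card γ *
      (Fintype.card γ - 1) ^ (m * m) < Fintype.card γ ^ (m * m)) :
    ∃ c : α × β → γ, ∀ X : Finset α, ∀ Y : Finset β, m ≤ #X → m ≤ #Y →
      ∀ i, ∃ x ∈ X, ∃ y ∈ Y, c (x, y) = i := by
  by_contra! hbad
  set g := Fintype.card γ
  set n := Fintype.card α * Fintype.card β
  have hcover : (univ : Finset (α × β → γ)) ⊆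
      (powersetCard m univ ×ˢ powersetCard m univ ×ˢ univ).biUnion
        fun p : Finset α × Finset β × γ => {c | ∀ a ∈ p.1 ×ˢ p.2.1, c a ≠ p.2.2} := by
    intro c _
    obtain ⟨X, Y, hX, hY, i, hi⟩ := hbad c
    obtain ⟨X', hX'X, hX'⟩ := exists_subset_card_eq hX
    obtain ⟨Y', hY'Y, hY'⟩ := exists_subset_card_eq hY
    refine mem_biUnion.2 ⟨(X', Y', i), by simp [hX', hY'], ?_⟩
    simp only [mem_filter, mem_univ, true_and, mem_product, Prod.forall]
    exact fun x y hxy => hi x (hX'X hxy.1) y (hY'Y hxy.2)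
  have hterm : ∀ p ∈ powersetCard m univ ×ˢ powersetCard m univ ×ˢ (univ : Finset γ),
      #{c : α × β → γ | ∀ a ∈ p.1 ×ˢ p.2.1, c a ≠ p.2.2} =
        (g - 1) ^ (m * m) * g ^ (n - m * m) := by
    rintro ⟨X, Y, i⟩ hp
    simp only [mem_product, mem_powersetCard_univ] at hp
    rw [card_filter_forall_mem_ne, card_product, hp.1, hp.2.1, Fintype.card_prod]
  have hmn : m * m ≤ n := Nat.mul_le_mul hα hβ
  have := calc g ^ n
      = #(univ : Finset (α × β → γ)) := by simp [g, n]
    _ ≤ _ := (card_le_card hcover).trans card_biUnion_le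
    _ = (Fintype.card α).choose m * (Fintype.card β).choose m * g *
          ((g - 1) ^ (m * m) * g ^ (n - m * m)) := by
      rw [sum_congr rfl hterm, sum_const, smul_eq_mul, card_product, card_product,
        card_powersetCard, card_powersetCard, card_univ, card_univ, card_univ]
      ring
    _ < g ^ (m * m) * g ^ (n - m * m) := by
      rw [← mul_assoc]; exact Nat.mul_lt_mul_of_pos_right h (by positivity)
    _ = g ^ n := by rw [← pow_add, Nat.add_sub_cancel' hmn]
  exact this.false
end Coloring

theorem mul_pow_le_mul_succ_pow (s m : ℕ) : m * s ^ m ≤ s * (s + 1) ^ m := by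
  induction m with
  | zero => simp
  | succ m ih =>
    have hpow : s ^ m ≤ (s + 1) ^ m := Nat.pow_le_pow_left (Nat.le_succ s) m
    calc (m + 1) * s ^ (m + 1) = s * (m * s ^ m) + s * s ^ m := by ring
      _ ≤ s * (s * (s + 1) ^ m) + s * (s + 1) ^ m := by gcongr
      _ = s * (s + 1) ^ (m + 1) := by ring

theorem mul_pow_le_succ_pow_of_mul_le {s B m : ℕ} (hs : 0 < s) (h : s * B ≤ m) :
    B * s ^ m ≤ (s + 1) ^ m :=
  Nat.le_of_mul_le_mul_left
    (calc s * (B * s ^ m) = s * B * s ^ m := by ring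
      _ ≤ m * s ^ m := by gcongr
      _ ≤ s * (s + 1) ^ m := mul_pow_le_mul_succ_pow s m) hs

theorem choose_mul_choose_mul_lt (r M m t : ℕ) (hr : 2 ≤ r)
    (hm : (r - 1) * (4 ^ M * (r + 1)) ≤ m) (ht : t ≤ M * m) :
    t.choose m * t.choose m * r * (r - 1) ^ (m * m) < r ^ (m * m) := by
  have hs : 0 < r - 1 := by omega
  have hm0 : m ≠ 0 := (Nat.mul_pos hs (by positivity)).trans_le hm |>.ne'
  have hchoose : t.choose m * t.choose m ≤ 4 ^ (M * m) :=
    calc t.choose m * t.choose m ≤ 2 ^ t * 2 ^ t :=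
          Nat.mul_le_mul (Nat.choose_le_two_pow t m) (Nat.choose_le_two_pow t m)
      _ = 4 ^ t := by rw [← mul_pow]; norm_num
      _ ≤ 4 ^ (M * m) := Nat.pow_le_pow_right (by norm_num) ht
  have hr1 : r - 1 + 1 = r := Nat.sub_add_cancel (by omega)
  calc t.choose m * t.choose m * r * (r - 1) ^ (m * m)
      ≤ 4 ^ (M * m) * r * (r - 1) ^ (m * m) := by gcongr
    _ < 4 ^ (M * m) * (r + 1) ^ m * (r - 1) ^ (m * m) := by
      gcongr
      exact (Nat.lt_succ_self r).trans_le (Nat.le_self_pow hm0 _)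
    _ = (4 ^ M * (r + 1) * (r - 1) ^ m) ^ m := by rw [mul_pow, mul_pow, pow_mul, pow_mul]
    _ ≤ ((r - 1 + 1) ^ m) ^ m := by gcongr; exact mul_pow_le_succ_pow_of_mul_le hs hm
    _ = r ^ (m * m) := by rw [hr1, pow_mul]

theorem exists_coloring_forall_card_ge_div (r M : ℕ) (hr : 2 ≤ r) (hM : 0 < M) :
    ∃ t₀ : ℕ, ∀ t ≥ t₀, ∃ c : Fin t × Fin t → Fin r, ∀ X Y : Finset (Fin t),
      (t : ℝ) / M ≤ #X → (t : ℝ) / M ≤ #Y →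
        ∀ i, ∃ x ∈ X, ∃ y ∈ Y, c (x, y) = i := by
  refine ⟨M * ((r - 1) * (4 ^ M * (r + 1))), fun t ht => ?_⟩
  have hM' : (0 : ℝ) < M := by exact_mod_cast hM
  set m := ⌈(t : ℝ) / M⌉₊
  have hmt : m ≤ t := Nat.ceil_le.2 (div_le_self (by positivity) (by exact_mod_cast hM))
  have htm : t ≤ M * m := by
    have := (div_le_iff₀ hM').1 (Nat.le_ceil ((t : ℝ) / M))
    exact_mod_cast (by linarith : (t : ℝ) ≤ M * m)
  have hm : (r - 1) * (4 ^ M * (r + 1)) ≤ m := by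
    rw [← Nat.cast_le (α := ℝ)]
    refine le_trans ?_ (Nat.le_ceil _)
    rw [le_div_iff₀ hM']
    exact_mod_cast (mul_comm _ M).trans_le ht
  have : NeZero r := ⟨by omega⟩
  obtain ⟨c, hc⟩ :=
    exists_coloring_forall_rectangle_surjective (α := Fin t) (β := Fin t) (γ := Fin r)
    (by simpa using hmt) (by simpa using hmt)
    (by simpa using choose_mul_choose_mul_lt r M m t hr hm htm)
  exact ⟨c, fun X Y hX hY => hc X Y (Nat.ceil_le.2 hX) (Nat.ceil_le.2 hY)⟩

theorem random_coloring_claim_general (r k : ℕ) (hr : 2 ≤ r) :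
    ∃ t₀ : ℕ, ∀ t ≥ t₀, ∃ c : Fin t × Fin t → Fin r,
      ∀ X Y : Finset (Fin t),
        ((t : ℝ)/((r : ℝ)*k)^k ≤ (X.card : ℝ)) →
        ((t : ℝ)/((r : ℝ)*k)^k ≤ (Y.card : ℝ)) →
        ∀ i : Fin r, ∃ x ∈ X, ∃ y ∈ Y, c (x, y) = i := by
  have hM : 0 < (r * k) ^ k := by
    rcases k.eq_zero_or_pos with rfl | hk
    · simp
    · positivity
  simpa using exists_coloring_forall_card_ge_div r ((r * k) ^ k) hr hM

/-- Claim 2.1: for `r ≥ 2`, `k ≥ 1` and `t` large enough, there is an `r`-coloring of the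
edges of the complete bipartite graph `K_{t,t}` such that between any two sets `X`, `Y` of
size at least `t/(rk)^k` on opposite sides, every color appears. -/
theorem random_coloring_claim (r k : ℕ) (hr : 2 ≤ r) (hk : 1 ≤ k) :
    ∃ t₀ : ℕ, ∀ t ≥ t₀, ∃ c : Fin t × Fin t → Fin r,
      ∀ X Y : Finset (Fin t),
        ((t : ℝ)/((r : ℝ)*k)^k ≤ (X.card : ℝ)) →
        ((t : ℝ)/((r : ℝ)*k)^k ≤ (Y.card : ℝ)) →
        ∀ i : Fin r, ∃ x ∈ X, ∃ y ∈ Y, c (x, y) = i :=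
  random_coloring_claim_general r k hr
end

section
/- Let r ≥ 2 be an even integer and let m ≥ 1 and k be integers with 10m ≤ k. There exists an r-edge-colored graph H' = (H'_1, …, H'_r) with χ(H') = k and reduced maximum matching number M(H') ≥ m such that for every n divisible by r(k−2m−1) there exist simple graphs G_1, …, G_r on a common vertex set of size n with e(G_i) ≥ C(n,2) − n²/(2r(k−2m−1)) for every i ∈ [r], whose colored union contains no copy of H'. -/
open SimpleGraph Set

/-- The colored union of the graphs `G i` (all on the common vertex set `W`) contains a
copy of the `r`-edge-colored graph `H`. -/
def ContainsCopy {r : ℕ} {V W : Type*} (G : Fin r → SimpleGraph W)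
    (H : Fin r → SimpleGraph V) : Prop :=
  ∃ φ : V ↪ W, ∀ (i : Fin r) (u v : V), (H i).Adj u v → (G i).Adj (φ u) (φ v)

/-- The `r`-edge-colored graph `H` admits a proper coloring of `H 0 ∪ ⋯ ∪ H (r-1)` with `χ`
colors together with `m` pairwise disjoint single-colored pairs of color classes, i.e. pairs
of distinct classes that are joined by edges of exactly one of the `r` colors. Hence the
reduced maximum matching number of `H` is at least `m` (when `χ = χ(H)`). -/
def HasRMMatching {r : ℕ} {V : Type*} (H : Fin r → SimpleGraph V) (χ m : ℕ) : Prop :=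
  ∃ C : (⨆ i, H i).Coloring (Fin χ), ∃ p : Fin m → Fin χ × Fin χ,
    Function.Injective (fun x : Fin m × Bool => if x.2 then (p x.1).1 else (p x.1).2) ∧
    (∀ j, (p j).1 ≠ (p j).2) ∧
    (∀ j : Fin m, ∃! c : Fin r,
      ∃ u v : V, (H c).Adj u v ∧ C u = (p j).1 ∧ C v = (p j).2)

/-!
Colour `0` of `H'` is complete on `k` vertices and every other colour is complete minus a
matching of `m` edges, so the `k - m` vertices of a transversal of the matching are pairwise
adjacent in every colour. The host vertices are split into `t = k - 2m - 1` blocks and carry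
labels `a` in `ℤ/r`; inside a block, `u` and `v` are non-adjacent exactly in colour
`a u + a v`, so no two vertices of a block are adjacent in every colour. A copy of `H'` would
therefore send the transversal into distinct blocks, impossible as `t < k - m`. Each vertex
misses at most `n / (r t)` others in each colour, which gives the edge count.
-/

open Finset

namespace SimpleGraph

variable {V : Type*} [Fintype V] [DecidableEq V]

theorem card_edgeFinset_add_card_edgeFinset_compl (G : SimpleGraph V) [DecidableRel G.Adj] :
    #G.edgeFinset + #Gᶜ.edgeFinset = (Fintype.card V).choose 2 := by
  rw [← card_union_of_disjoint (disjoint_edgeFinset.mpr disjoint_compl_right), ← edgeFinset_sup,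
    ← card_edgeFinset_top_eq_card_choose_two]
  congr!
  exact sup_compl_eq_top

theorem le_card_edgeFinset_compl_of_degree_le (G : SimpleGraph V) [DecidableRel G.Adj] {d : ℕ}
    (hd : ∀ v, G.degree v ≤ d) :
    (Fintype.card V : ℝ) * (Fintype.card V - 1) / 2 - Fintype.card V * d / 2
      ≤ #Gᶜ.edgeFinset := by
  have hsum : 2 * #G.edgeFinset ≤ Fintype.card V * d := by
    rw [← sum_degrees_eq_twice_card_edges]
    simpa using sum_le_sum fun v (_ : v ∈ Finset.univ) => hd v
  have hsumR : 2 * (#G.edgeFinset : ℝ) ≤ Fintype.card V * d := by exact_mod_cast hsum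
  have htotal := congrArg (Nat.cast : ℕ → ℝ) G.card_edgeFinset_add_card_edgeFinset_compl
  rw [Nat.cast_add, Nat.cast_choose_two] at htotal
  linarith

end SimpleGraph

section NoCopy

variable {r : ℕ} {V W : Type*} {G : Fin r → SimpleGraph W} {H : Fin r → SimpleGraph V}

theorem ContainsCopy.nonempty_hom_iInf (h : ContainsCopy G H) :
    Nonempty ((⨅ c, H c) →g (⨅ c, G c)) := by
  obtain ⟨φ, hφ⟩ := h
  refine ⟨⟨φ, fun {u v} huv => ?_⟩⟩
  rw [iInf_adj] at huv ⊢
  exact ⟨fun c => hφ c u v (huv.1 c), φ.injective.ne huv.2⟩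

theorem not_containsCopy_of_isClique_of_coloring {T : Type*} [Fintype T] {s : Finset V}
    (hs : (⨅ c, H c).IsClique s) (C : (⨅ c, G c).Coloring T) (hlt : Fintype.card T < #s) :
    ¬ContainsCopy G H := fun h =>
  (hs.card_le_of_coloring (C.comap h.nonempty_hom_iInf.some)).not_gt hlt

end NoCopy

section HostGraphs

variable {T A Q : Type*} [AddCommMagma A]

def sameBlockSumGraph (c : A) : SimpleGraph (T × A × Q) where
  Adj u v := u ≠ v ∧ u.1 = v.1 ∧ u.2.1 + v.2.1 = c
  symm := ⟨fun _ _ ⟨hne, hblock, hsum⟩ =>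
    ⟨hne.symm, hblock.symm, (add_comm _ _).trans hsum⟩⟩
  loopless := ⟨fun _ h => h.1 rfl⟩

instance [DecidableEq T] [DecidableEq A] [DecidableEq Q] (c : A) :
    DecidableRel (sameBlockSumGraph (T := T) (Q := Q) c).Adj := fun u v =>
  inferInstanceAs (Decidable (u ≠ v ∧ u.1 = v.1 ∧ u.2.1 + v.2.1 = c))

def blockColoring : (⨅ c, (sameBlockSumGraph (T := T) (Q := Q) (c : A))ᶜ).Coloring T :=
  Coloring.mk Prod.fst fun {u v} huv hblock => by
    rw [iInf_adj] at huv
    exact ((compl_adj _ u v).mp (huv.1 (u.2.1 + v.2.1))).2 ⟨huv.2, hblock, rfl⟩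

theorem degree_sameBlockSumGraph_le [IsLeftCancelAdd A] [Fintype T] [Fintype A] [Fintype Q]
    [DecidableEq T] [DecidableEq A] [DecidableEq Q] (c : A) (u : T × A × Q) :
    (sameBlockSumGraph (T := T) (Q := Q) c).degree u ≤ Fintype.card Q := by
  refine card_le_card_of_injOn (fun v => v.2.2) (fun _ _ => mem_univ _)
    fun v hv w hw hvw => ?_
  simp only [coe_neighborFinset, mem_neighborSet] at hv hw
  obtain ⟨-, hv₁, hv₂⟩ := hv
  obtain ⟨-, hw₁, hw₂⟩ := hw
  exact Prod.ext (hv₁.symm.trans hw₁) (Prod.ext (add_left_cancel (hv₂.trans hw₂.symm)) hvw)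

theorem le_card_edgeFinset_compl_sameBlockSumGraph {t r q : ℕ} (ht : t ≠ 0) (hr : r ≠ 0)
    (c : Fin r) :
    ((r * t * q : ℕ) : ℝ) * ((r * t * q : ℕ) - 1) / 2 - ((r * t * q : ℕ) : ℝ) ^ 2 / (2 * r * t)
      ≤ #(sameBlockSumGraph (T := Fin t) (Q := Fin q) c)ᶜ.edgeFinset := by
  have hbound := le_card_edgeFinset_compl_of_degree_le _
    (degree_sameBlockSumGraph_le (T := Fin t) (Q := Fin q) c)
  have hcard : Fintype.card (Fin t × Fin r × Fin q) = r * t * q := by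
    simp only [Fintype.card_prod, Fintype.card_fin]
    ring
  rw [hcard, Fintype.card_fin] at hbound
  convert hbound using 2
  field_simp
  push_cast
  ring

end HostGraphs

section Pattern

variable (k m : ℕ)

def pairMatching : SimpleGraph (Fin k) where
  Adj u v := u ≠ v ∧ (u : ℕ) / 2 = (v : ℕ) / 2 ∧ (u : ℕ) / 2 < m
  symm := ⟨fun _ _ ⟨hne, hpair, hlt⟩ => ⟨hne.symm, hpair.symm, hpair ▸ hlt⟩⟩
  loopless := ⟨fun _ h => h.1 rfl⟩

def matchingPattern {r : ℕ} (c : Fin r) : SimpleGraph (Fin k) :=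
  if (c : ℕ) = 0 then ⊤ else (pairMatching k m)ᶜ

def pairMatchingTransversal : Fin (k - m) ↪ Fin k where
  toFun i := ⟨if (i : ℕ) < m then 2 * i else i + m, by split_ifs <;> omega⟩
  inj' i j h := by
    simp only [Fin.mk.injEq] at h
    exact Fin.ext (by split_ifs at h <;> omega)

variable {k m} {r : ℕ}

theorem val_pairMatchingTransversal (i : Fin (k - m)) :
    (pairMatchingTransversal k m i : ℕ) =
      if (i : ℕ) < m then 2 * (i : ℕ) else (i : ℕ) + m :=
  rfl

theorem iSup_matchingPattern (hr : 0 < r) : ⨆ c : Fin r, matchingPattern k m c = ⊤ :=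
  top_le_iff.mp (le_iSup_of_le ⟨0, hr⟩ (by simp [matchingPattern]))

theorem compl_pairMatching_le_iInf_matchingPattern :
    (pairMatching k m)ᶜ ≤ ⨅ c : Fin r, matchingPattern k m c :=
  le_iInf fun c => by
    unfold matchingPattern
    split_ifs
    exacts [le_top, le_rfl]

theorem val_eq_zero_of_pairMatching_adj {c : Fin r} {u v : Fin k}
    (hM : (pairMatching k m).Adj u v) (hH : (matchingPattern k m c).Adj u v) : (c : ℕ) = 0 := by
  by_contra hc
  simp only [matchingPattern, hc, if_false, compl_adj] at hH
  exact hH.2 hM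

theorem isIndepSet_pairMatchingTransversal :
    (pairMatching k m).IsIndepSet (univ.map (pairMatchingTransversal k m) : Finset (Fin k)) := by
  intro u hu v hv hne ⟨_, hpair, hlt⟩
  simp only [coe_map, coe_univ, Set.image_univ, Set.mem_range] at hu hv
  obtain ⟨i, rfl⟩ := hu
  obtain ⟨j, rfl⟩ := hv
  have hij : (i : ℕ) ≠ j := fun h => hne (congrArg _ (Fin.ext h))
  rw [val_pairMatchingTransversal, val_pairMatchingTransversal] at hpair
  rw [val_pairMatchingTransversal] at hlt
  split_ifs at hpair hlt <;> omega

theorem hasRMMatching_matchingPattern (hr : 0 < r) (hmk : 2 * m ≤ k) :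
    HasRMMatching (matchingPattern (r := r) k m) k m := by
  refine ⟨selfColoring _, fun j => (⟨2 * j, by omega⟩, ⟨2 * j + 1, by omega⟩), ?_,
    fun j => by simp [Fin.ext_iff], fun j => ⟨⟨0, hr⟩, ?_, ?_⟩⟩
  · rintro ⟨i, _ | _⟩ ⟨j, _ | _⟩ h <;> simp [Fin.ext_iff] at h ⊢ <;> omega
  · exact ⟨_, _, by simp [matchingPattern, Fin.ext_iff], rfl, rfl⟩
  · rintro c ⟨u, v, huv, rfl, rfl⟩
    refine Fin.ext (val_eq_zero_of_pairMatching_adj ⟨?_, ?_, ?_⟩ huv) <;> simp [Fin.ext_iff]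
    omega

end Pattern

theorem construction_main_theorem_tight_general (r m k : ℕ) (hr : 2 ≤ r)
    (hm : 1 ≤ m) (hmk : 10*m ≤ k) :
    ∃ (V : Type) (_ : Fintype V) (H' : Fin r → SimpleGraph V),
      (⨆ i, H' i).chromaticNumber = (k : ℕ∞) ∧
      HasRMMatching H' k m ∧
      ∀ n : ℕ, r*(k - 2*m - 1) ∣ n →
        ∃ (W : Type) (_ : Fintype W), Fintype.card W = n ∧
          ∃ G : Fin r → SimpleGraph W,
            (∀ i, (n : ℝ)*((n : ℝ)-1)/2 - (n : ℝ)^2/(2*r*((k : ℝ)-2*m-1))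
                ≤ ((G i).edgeSet.ncard : ℝ)) ∧
            ¬ ContainsCopy G H' := by
  refine ⟨Fin k, inferInstance, matchingPattern k m, ?_,
    hasRMMatching_matchingPattern (by omega) (by omega), ?_⟩
  · rw [iSup_matchingPattern (by omega), chromaticNumber_top, Fintype.card_fin]
  rintro n ⟨q, rfl⟩
  set t := k - 2 * m - 1 with ht
  have htR : (k : ℝ) - 2 * m - 1 = t := by
    rw [ht, Nat.cast_sub (by omega), Nat.cast_sub (by omega)]
    push_cast
    ring
  refine ⟨Fin t × Fin r × Fin q, inferInstance, ?_, fun c => (sameBlockSumGraph c)ᶜ,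
    fun c => ?_, ?_⟩
  · simp only [Fintype.card_prod, Fintype.card_fin]
    ring
  · rw [← coe_edgeFinset, ncard_coe_finset, htR]
    exact le_card_edgeFinset_compl_sameBlockSumGraph (by omega) (by omega) c
  · exact not_containsCopy_of_isClique_of_coloring
      (((isClique_compl _).mpr isIndepSet_pairMatchingTransversal).mono
        compl_pairMatching_le_iInf_matchingPattern) blockColoring
        (by simp only [Fintype.card_fin, card_map, card_univ]; omega)

/-- The construction showing that the main theorem is tight up to the constant factor:
for every even `r ≥ 2` and `m ≥ 1`, `k` with `10m ≤ k`, there is an `r`-edge-colored graph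
`H'` with chromatic number `k` and reduced maximum matching number at least `m` such that
for every `n` divisible by `r(k-2m-1)` there are graphs `G 1, …, G r` on `n` common
vertices, each with at least `C(n,2) - n²/(2r(k-2m-1))` edges, whose colored union
contains no copy of `H'`. -/
theorem construction_main_theorem_tight (r m k : ℕ) (hr : 2 ≤ r) (hre : Even r)
    (hm : 1 ≤ m) (hmk : 10*m ≤ k) :
    ∃ (V : Type) (_ : Fintype V) (H' : Fin r → SimpleGraph V),
      (⨆ i, H' i).chromaticNumber = (k : ℕ∞) ∧
      HasRMMatching H' k m ∧
      ∀ n : ℕ, r*(k - 2*m - 1) ∣ n →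
        ∃ (W : Type) (_ : Fintype W), Fintype.card W = n ∧
          ∃ G : Fin r → SimpleGraph W,
            (∀ i, (n : ℝ)*((n : ℝ)-1)/2 - (n : ℝ)^2/(2*r*((k : ℝ)-2*m-1))
                ≤ ((G i).edgeSet.ncard : ℝ)) ∧
            ¬ ContainsCopy G H' :=
  construction_main_theorem_tight_general r m k hr hm hmk
end

section
/- Let ℓ ≥ 3 be odd and let (C_R, C_B) be a bicolored cycle of length ℓ that contains two adjacent edges of different colors (one red, one blue) and two adjacent edges that are both red. Then there exists an integer s ≥ 1 such that (C_R, C_B) embeds into the blow-up T1^(s) or embeds into the blow-up T2^(s); that is, there is an injective map φ from {0, …, ℓ−1} to the vertex set of the blow-up mapping every red edge of the cycle to a red edge of the blow-up and every blue edge to a blue edge of the blow-up. -/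
/-
The red–blue switch gives a vertex `w` whose edge to `w + 1` is red and whose edge to `w - 1` is
blue (or the reverse). Send `w` to the apex `c` of `T2` and the rest of the cycle, a path
`w + 1, w + 2, …, w - 1` with an even number of vertices, alternately to `a` and `b`. Since
`{a, b}` carries both colors, every edge of that path is respected; the path starts at `a`
and, by parity, ends at `b`, so the two edges at `w` land on the red edge `{c, a}` and the blue
edge `{c, b}`. Spreading the vertices over distinct copies turns this homomorphism into an
embedding into a blow-up of `T2`.
-/

open SimpleGraph Set

/-- Red part of the triangle `T1`: all three edges `{0,1}, {0,2}, {1,2}` are red. -/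
def T1R : SimpleGraph (Fin 3) := ⊤

/-- Blue part of the triangle `T1`: only the edge `{0,1}` is blue. -/
def T1B : SimpleGraph (Fin 3) := SimpleGraph.fromRel (fun a b => a = 0 ∧ b = 1)

/-- Red part of the triangle `T2`: the edges `{0,1}` and `{0,2}` are red. -/
def T2R : SimpleGraph (Fin 3) :=
  SimpleGraph.fromRel (fun a b => (a = 0 ∧ b = 1) ∨ (a = 0 ∧ b = 2))

/-- Blue part of the triangle `T2`: the edges `{0,1}` and `{1,2}` are blue. -/
def T2B : SimpleGraph (Fin 3) :=
  SimpleGraph.fromRel (fun a b => (a = 0 ∧ b = 1) ∨ (a = 1 ∧ b = 2))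

lemma ZMod.val_add_one_of_add_one_ne_zero {n : ℕ} [NeZero n] {x : ZMod n} (hx : x + 1 ≠ 0) :
    (x + 1).val = x.val + 1 := by
  have hn : n ≠ 1 := by rintro rfl; exact hx (Subsingleton.elim _ _)
  have hpos := ZMod.val_pos.2 hx
  rw [ZMod.val_add, ZMod.val_one'' hn] at hpos ⊢
  rcases Nat.lt_or_eq_of_le (ZMod.val_lt x) with hlt | heq
  · exact Nat.mod_eq_of_lt hlt
  · rw [← Nat.succ_eq_add_one, heq, Nat.mod_self] at hpos
    exact absurd hpos (lt_irrefl 0)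

lemma adj_add_one_or_of_le_cycleG {ℓ : ℕ} {G : SimpleGraph (ZMod ℓ)} (hG : G ≤ cycleG ℓ)
    {u v : ZMod ℓ} (h : G.Adj u v) : v = u + 1 ∨ u = v + 1 :=
  ((SimpleGraph.fromRel_adj _ _ _).1 (hG h)).2

lemma forall_adj_of_forall_adj_add_one {ℓ : ℕ} {β : Type*} {G : SimpleGraph (ZMod ℓ)}
    {H : SimpleGraph β} (hG : G ≤ cycleG ℓ) {f : ZMod ℓ → β}
    (hf : ∀ u, G.Adj u (u + 1) → H.Adj (f u) (f (u + 1))) :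
    ∀ u v, G.Adj u v → H.Adj (f u) (f v) := by
  intro u v h
  rcases adj_add_one_or_of_le_cycleG hG h with rfl | rfl
  · exact hf u h
  · exact (hf v h.symm).symm

section ApexAlternating

variable {ℓ : ℕ} {β : Type*}

/-- Sends `w` to `c` and every other vertex `u` to `a` or `b` according to the parity of the
representative of `u - w` in `[0, ℓ)`. -/
def apexAlternating (w : ZMod ℓ) (c a b : β) (u : ZMod ℓ) : β :=
  if u = w then c else if Odd (u - w).val then a else b

variable {w : ZMod ℓ} {c a b : β}

@[simp]
lemma apexAlternating_self : apexAlternating w c a b w = c := if_pos rfl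

lemma apexAlternating_add_one_self (hℓ : ℓ ≠ 1) : apexAlternating w c a b (w + 1) = a := by
  have hne : w + 1 ≠ w := by simpa [ZMod.one_eq_zero_iff] using hℓ
  simp [apexAlternating, hne, ZMod.val_one'' hℓ]

lemma apexAlternating_sub_one_self (hodd : Odd ℓ) (hℓ : ℓ ≠ 1) :
    apexAlternating w c a b (w - 1) = b := by
  have hne : w - 1 ≠ w := by simpa [ZMod.one_eq_zero_iff] using hℓ
  obtain ⟨n, rfl⟩ := Nat.exists_eq_add_one_of_ne_zero hodd.pos.ne'
  have hn : ¬Odd n := Nat.odd_add_one.1 hodd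
  simp [apexAlternating, hne, ZMod.val_neg_one, hn]

lemma apexAlternating_adj_add_one (hodd : Odd ℓ) {H : SimpleGraph β} (hab : H.Adj a b)
    {u : ZMod ℓ} (hu : u ≠ w) (hu' : u + 1 ≠ w) :
    H.Adj (apexAlternating w c a b u) (apexAlternating w c a b (u + 1)) := by
  have : NeZero ℓ := ⟨hodd.pos.ne'⟩
  have hval : (u + 1 - w).val = (u - w).val + 1 := by
    rw [← sub_ne_zero, add_sub_right_comm] at hu'
    rw [add_sub_right_comm, ZMod.val_add_one_of_add_one_ne_zero hu']
  by_cases hpar : Odd (u - w).val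
  · have : ¬Odd (u + 1 - w).val := by rw [hval, Nat.odd_add_one, not_not]; exact hpar
    simpa [apexAlternating, hu, hu', hpar, this] using hab
  · have : Odd (u + 1 - w).val := by rw [hval, Nat.odd_add_one]; exact hpar
    simpa [apexAlternating, hu, hu', hpar, this] using hab.symm

theorem apexAlternating_isHom_of_switch (hodd : Odd ℓ) (hℓ : ℓ ≠ 1)
    {CR CB : SimpleGraph (ZMod ℓ)} (hdisj : ∀ u v, ¬(CR.Adj u v ∧ CB.Adj u v))
    (hunion : CR ⊔ CB = cycleG ℓ) (hR : CR.Adj w (w + 1)) (hB : CB.Adj (w - 1) w)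
    {HR HB : SimpleGraph β} (hca : HR.Adj c a) (hbc : HB.Adj b c) (habR : HR.Adj a b)
    (habB : HB.Adj a b) :
    (∀ u v, CR.Adj u v → HR.Adj (apexAlternating w c a b u) (apexAlternating w c a b v)) ∧
      (∀ u v, CB.Adj u v → HB.Adj (apexAlternating w c a b u) (apexAlternating w c a b v)) := by
  constructor
  · refine forall_adj_of_forall_adj_add_one (hunion ▸ le_sup_left) fun u huv => ?_
    by_cases hu : u = w
    · subst hu
      rw [apexAlternating_self, apexAlternating_add_one_self hℓ]
      exact hca
    by_cases hu' : u + 1 = w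
    · rw [eq_sub_of_add_eq hu', sub_add_cancel] at huv
      exact absurd ⟨huv, hB⟩ (hdisj _ _)
    exact apexAlternating_adj_add_one hodd habR hu hu'
  · refine forall_adj_of_forall_adj_add_one (hunion ▸ le_sup_right) fun u huv => ?_
    by_cases hu : u = w
    · subst hu
      exact absurd ⟨hR, huv⟩ (hdisj _ _)
    by_cases hu' : u + 1 = w
    · rw [eq_sub_of_add_eq hu', sub_add_cancel, apexAlternating_self,
        apexAlternating_sub_one_self hodd hℓ]
      exact hbc
    exact apexAlternating_adj_add_one hodd habB hu hu'

end ApexAlternating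

lemma exists_embedding_blowup_of_forall_adj {α β : Type*} [Fintype α] {GR GB : SimpleGraph α}
    {HR HB : SimpleGraph β} (f : α → β) (hR : ∀ u v, GR.Adj u v → HR.Adj (f u) (f v))
    (hB : ∀ u v, GB.Adj u v → HB.Adj (f u) (f v)) :
    ∃ φ : α ↪ β × Fin (Fintype.card α),
      (∀ u v, GR.Adj u v → (HR.comap Prod.fst).Adj (φ u) (φ v)) ∧
      (∀ u v, GB.Adj u v → (HB.comap Prod.fst).Adj (φ u) (φ v)) :=
  ⟨⟨fun u => (f u, Fintype.equivFin α u),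
    fun _ _ h => (Fintype.equivFin α).injective (congrArg Prod.snd h)⟩, hR, hB⟩

theorem odd_cycle_embeds_in_T1_or_T2_blowup_general (ℓ : ℕ) (hℓ : 3 ≤ ℓ) (hodd : Odd ℓ)
    (CR CB : SimpleGraph (ZMod ℓ))
    (hdisj : ∀ u v, ¬(CR.Adj u v ∧ CB.Adj u v))
    (hunion : CR ⊔ CB = cycleG ℓ)
    (hRB : ∃ u : ZMod ℓ, (CR.Adj u (u+1) ∧ CB.Adj (u+1) (u+2)) ∨
      (CB.Adj u (u+1) ∧ CR.Adj (u+1) (u+2))) :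
    ∃ s : ℕ, 1 ≤ s ∧
      ((∃ φ : ZMod ℓ ↪ Fin 3 × Fin s,
          (∀ u v, CR.Adj u v → (T1R.comap (Prod.fst : Fin 3 × Fin s → Fin 3)).Adj (φ u) (φ v)) ∧
          (∀ u v, CB.Adj u v → (T1B.comap (Prod.fst : Fin 3 × Fin s → Fin 3)).Adj (φ u) (φ v))) ∨
        (∃ φ : ZMod ℓ ↪ Fin 3 × Fin s,
          (∀ u v, CR.Adj u v → (T2R.comap (Prod.fst : Fin 3 × Fin s → Fin 3)).Adj (φ u) (φ v)) ∧
          (∀ u v, CB.Adj u v → (T2B.comap (Prod.fst : Fin 3 × Fin s → Fin 3)).Adj (φ u) (φ v)))) := by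
  have : NeZero ℓ := ⟨by omega⟩
  have hℓ1 : ℓ ≠ 1 := by omega
  refine ⟨Fintype.card (ZMod ℓ), Fintype.card_pos, Or.inr ?_⟩
  obtain ⟨u, hswitch⟩ := hRB
  obtain ⟨w, rfl⟩ : ∃ w, u = w - 1 := ⟨u + 1, by ring⟩
  rw [sub_add_cancel, show w - 1 + 2 = w + 1 by ring] at hswitch
  rcases hswitch with ⟨hR, hB⟩ | ⟨hB, hR⟩
  · -- `T2` is invariant under exchanging the colors together with the vertices `0` and `1`
    obtain ⟨hφB, hφR⟩ := apexAlternating_isHom_of_switch (HR := T2B) (HB := T2R)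
      (c := 2) (a := 1) (b := 0) hodd hℓ1 (fun u v h => hdisj u v h.symm)
      (sup_comm CR CB ▸ hunion) hB hR
      (by simp [T2B]) (by simp [T2R]) (by simp [T2B]) (by simp [T2R])
    exact exists_embedding_blowup_of_forall_adj _ hφR hφB
  · obtain ⟨hφR, hφB⟩ := apexAlternating_isHom_of_switch (HR := T2R) (HB := T2B)
      (c := 2) (a := 0) (b := 1) hodd hℓ1 hdisj hunion hR hB
      (by simp [T2R]) (by simp [T2B]) (by simp [T2R]) (by simp [T2B])
    exact exists_embedding_blowup_of_forall_adj _ hφR hφB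

/-- Any bicolored odd cycle having a pair of adjacent edges of different colors and a pair
of adjacent red edges embeds into a sufficiently large blow-up of `T1` or of `T2` (the
blow-up of a bicolored graph on `Fin 3` with `s` vertices per part has color-`X` graph
`X.comap Prod.fst` on `Fin 3 × Fin s`). -/
theorem odd_cycle_embeds_in_T1_or_T2_blowup (ℓ : ℕ) (hℓ : 3 ≤ ℓ) (hodd : Odd ℓ)
    (CR CB : SimpleGraph (ZMod ℓ))
    (hdisj : ∀ u v, ¬(CR.Adj u v ∧ CB.Adj u v))
    (hunion : CR ⊔ CB = cycleG ℓ)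
    (hRB : ∃ u : ZMod ℓ, (CR.Adj u (u+1) ∧ CB.Adj (u+1) (u+2)) ∨
      (CB.Adj u (u+1) ∧ CR.Adj (u+1) (u+2)))
    (hRR : ∃ u : ZMod ℓ, CR.Adj u (u+1) ∧ CR.Adj (u+1) (u+2)) :
    ∃ s : ℕ, 1 ≤ s ∧
      ((∃ φ : ZMod ℓ ↪ Fin 3 × Fin s,
          (∀ u v, CR.Adj u v → (T1R.comap (Prod.fst : Fin 3 × Fin s → Fin 3)).Adj (φ u) (φ v)) ∧
          (∀ u v, CB.Adj u v → (T1B.comap (Prod.fst : Fin 3 × Fin s → Fin 3)).Adj (φ u) (φ v))) ∨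
        (∃ φ : ZMod ℓ ↪ Fin 3 × Fin s,
          (∀ u v, CR.Adj u v → (T2R.comap (Prod.fst : Fin 3 × Fin s → Fin 3)).Adj (φ u) (φ v)) ∧
          (∀ u v, CB.Adj u v → (T2B.comap (Prod.fst : Fin 3 × Fin s → Fin 3)).Adj (φ u) (φ v)))) :=
  odd_cycle_embeds_in_T1_or_T2_blowup_general ℓ hℓ hodd CR CB hdisj hunion hRB
end

section
/- Let k ≥ 1 and let G be a graph on n vertices containing no complete subgraph K_{k+1}, and set t := ex(n, K_{k+1}) − e(G), where ex(n, K_{k+1}) is the maximum number of edges of a K_{k+1}-free graph on n vertices. Then there is a map f : V(G) → {1, …, k} such that the number of edges {u, v} of G with f(u) = f(v) is at most t; in other words, G can be made k-partite by deleting at most t edges. -/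
open SimpleGraph Set

/-- The Turán number `ex(n, K_{k+1})`: the maximum number of edges of a `K_{k+1}`-free
graph on `n` vertices. -/
noncomputable def turanEx (n k : ℕ) : ℕ :=
  sSup {m | ∃ G : SimpleGraph (Fin n), G.CliqueFree (k+1) ∧ G.edgeSet.ncard = m}

/-!
Füredi's argument, by induction on `k`. Pick a vertex `x` of maximum degree `D`, colour its
neighbourhood `N` by induction (the graph on `N` is `K_k`-free because `x` sees all of it), and put
`V \ N` into one new class. Outside `N` the colouring gains `e(V \ N)` monochromatic edges and
`G` has `e(N, V \ N) + e(V \ N)` edges; together these are counted by the degrees of the vertices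
outside `N`, so they number at most `(n - D) D`, which is exactly what the complete multipartite
graph `K_f` of the new colouring `f` gains. Hence `mono(G, f) + e(G) ≤ e(K_f)`, and `K_f` is
`k`-colourable, hence `K_{k+1}`-free, so `e(K_f) ≤ ex(n, K_{k+1})`.

Here `K_f` is `(⊤ : SimpleGraph (Fin k)).comap f` and the monochromatic edges are those of
`G \ K_f`. Edges are counted as ordered adjacent pairs inside a vertex set
(`SimpleGraph.interedges s s`), so that the induction runs over subsets of one vertex type.
-/

open Finset

theorem ncard_edgeSet_le_turanEx {k : ℕ} {W : Type} [Fintype W] {H : SimpleGraph W}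
    (hH : H.CliqueFree (k + 1)) : H.edgeSet.ncard ≤ turanEx (Fintype.card W) k := by
  classical
  rw [turanEx]
  let e := Iso.map (Fintype.equivFin W) H
  have hbdd : BddAbove {m | ∃ G : SimpleGraph (Fin (Fintype.card W)),
      G.CliqueFree (k + 1) ∧ G.edgeSet.ncard = m} :=
    ((Set.finite_range fun G : SimpleGraph (Fin _) ↦ G.edgeSet.ncard).subset
      (by rintro _ ⟨G, -, rfl⟩; exact ⟨G, rfl⟩)).bddAbove
  refine le_csSup hbdd ⟨_, hH.comap e.symm.isContained, ?_⟩
  rw [← coe_edgeFinset, ← coe_edgeFinset, ncard_coe_finset, ncard_coe_finset,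
    e.card_edgeFinset_eq]

namespace SimpleGraph

variable {V : Type*} (G : SimpleGraph V) [DecidableRel G.Adj]

theorem card_interedges_eq_sum (s t : Finset V) :
    #(G.interedges s t) = ∑ v ∈ s, #{w ∈ t | G.Adj v w} := by
  rw [interedges_def, card_filter, sum_product]
  exact sum_congr rfl fun v _ ↦ (card_filter _ _).symm

theorem card_interedges_union_left [DecidableEq V] {s s' : Finset V} (h : Disjoint s s')
    (t : Finset V) :
    #(G.interedges (s ∪ s') t) = #(G.interedges s t) + #(G.interedges s' t) := by
  rw [← Finset.card_union_of_disjoint (G.interedges_disjoint_left h t)]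
  simp only [interedges_def, union_product, filter_union]

theorem card_interedges_union_right [DecidableEq V] (s : Finset V) {t t' : Finset V}
    (h : Disjoint t t') :
    #(G.interedges s (t ∪ t')) = #(G.interedges s t) + #(G.interedges s t') := by
  rw [← Finset.card_union_of_disjoint (G.interedges_disjoint_right s h)]
  simp only [interedges_def, product_union, filter_union]

theorem card_interedges_comm (s t : Finset V) :
    #(G.interedges s t) = #(G.interedges t s) :=
  @Rel.card_interedges_comm _ _ _ G.symm s t

theorem card_interedges_univ [Fintype V] [DecidableEq V] :
    #(G.interedges univ univ) = 2 * G.edgeSet.ncard := by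
  rw [card_interedges_eq_sum, ← coe_edgeFinset, ncard_coe_finset,
    ← sum_degrees_eq_twice_card_edges]
  refine sum_congr rfl fun v _ ↦ ?_
  rw [← card_neighborFinset_eq_degree, neighborFinset_eq_filter]

variable {G}

theorem interedges_congr {H : SimpleGraph V} [DecidableRel H.Adj] {s t : Finset V}
    (h : ∀ a ∈ s, ∀ b ∈ t, (G.Adj a b ↔ H.Adj a b)) : G.interedges s t = H.interedges s t :=
  filter_congr fun _ hx ↦ h _ (mem_product.1 hx).1 _ (mem_product.1 hx).2

theorem interedges_eq_empty {s t : Finset V} (h : ∀ a ∈ s, ∀ b ∈ t, ¬G.Adj a b) :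
    G.interedges s t = ∅ :=
  filter_false_of_mem fun _ hx ↦ h _ (mem_product.1 hx).1 _ (mem_product.1 hx).2

theorem interedges_eq_product {s t : Finset V} (h : ∀ a ∈ s, ∀ b ∈ t, G.Adj a b) :
    G.interedges s t = s ×ˢ t :=
  filter_true_of_mem fun _ hx ↦ h _ (mem_product.1 hx).1 _ (mem_product.1 hx).2

theorem card_interedges_union_self [DecidableEq V] {N M : Finset V} (hNM : Disjoint N M) :
    #(G.interedges (N ∪ M) (N ∪ M)) = #(G.interedges N N) + #(G.interedges N M)
      + (#(G.interedges M N) + #(G.interedges M M)) := by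
  rw [card_interedges_union_left _ hNM, card_interedges_union_right _ _ hNM,
    card_interedges_union_right _ _ hNM]

variable {α β : Type*} [DecidableEq V] [DecidableEq α] [DecidableEq β] {N M : Finset V}

theorem card_interedges_sdiff_comap_top_union (f : V → α) (g : V → β) (hNM : Disjoint N M)
    (hfN : ∀ u ∈ N, ∀ v ∈ N, (f u = f v ↔ g u = g v))
    (hfNM : ∀ u ∈ N, ∀ v ∈ M, f u ≠ f v) (hfM : ∀ u ∈ M, ∀ v ∈ M, f u = f v) :
    #((G \ (⊤ : SimpleGraph α).comap f).interedges (N ∪ M) (N ∪ M))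
      = #((G \ (⊤ : SimpleGraph β).comap g).interedges N N) + #(G.interedges M M) := by
  rw [card_interedges_union_self hNM,
    interedges_congr (s := N) (t := N) (H := G \ (⊤ : SimpleGraph β).comap g)
      fun u hu v hv ↦ by simp [hfN u hu v hv],
    interedges_eq_empty (s := N) (t := M) fun u hu v hv ↦ by simp [hfNM u hu v hv],
    interedges_eq_empty (s := M) (t := N) fun u hu v hv ↦ by simp [Ne.symm (hfNM v hv u hu)],
    interedges_congr (s := M) (t := M) (H := G) fun u hu v hv ↦ by simp [hfM u hu v hv]]
  simp

theorem card_interedges_comap_top_union (f : V → α) (g : V → β) (hNM : Disjoint N M)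
    (hfN : ∀ u ∈ N, ∀ v ∈ N, (f u = f v ↔ g u = g v))
    (hfNM : ∀ u ∈ N, ∀ v ∈ M, f u ≠ f v) (hfM : ∀ u ∈ M, ∀ v ∈ M, f u = f v) :
    #(((⊤ : SimpleGraph α).comap f).interedges (N ∪ M) (N ∪ M))
      = #(((⊤ : SimpleGraph β).comap g).interedges N N) + 2 * (#N * #M) := by
  rw [card_interedges_union_self hNM,
    interedges_congr (s := N) (t := N) (H := (⊤ : SimpleGraph β).comap g)
      fun u hu v hv ↦ by simp [hfN u hu v hv],
    interedges_eq_product (s := N) (t := M) fun u hu v hv ↦ by simp [hfNM u hu v hv],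
    interedges_eq_product (s := M) (t := N) fun u hu v hv ↦ by simp [Ne.symm (hfNM v hv u hu)],
    interedges_eq_empty (s := M) (t := M) fun u hu v hv ↦ by simp [hfM u hu v hv],
    card_product, card_product, Finset.card_empty]
  ring

theorem card_interedges_sdiff_comap_top_add_le_union (f : V → α) (g : V → β)
    (hNM : Disjoint N M) (hfN : ∀ u ∈ N, ∀ v ∈ N, (f u = f v ↔ g u = g v))
    (hfNM : ∀ u ∈ N, ∀ v ∈ M, f u ≠ f v) (hfM : ∀ u ∈ M, ∀ v ∈ M, f u = f v)
    (hdeg : ∀ v ∈ M, #{w ∈ N ∪ M | G.Adj v w} ≤ #N)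
    (hN : #((G \ (⊤ : SimpleGraph β).comap g).interedges N N) + #(G.interedges N N)
      ≤ #(((⊤ : SimpleGraph β).comap g).interedges N N)) :
    #((G \ (⊤ : SimpleGraph α).comap f).interedges (N ∪ M) (N ∪ M))
      + #(G.interedges (N ∪ M) (N ∪ M))
      ≤ #(((⊤ : SimpleGraph α).comap f).interedges (N ∪ M) (N ∪ M)) := by
  have hout : #(G.interedges M N) + #(G.interedges M M) ≤ #M * #N := by
    rw [← card_interedges_union_right _ _ hNM, card_interedges_eq_sum]
    simpa using sum_le_card_nsmul _ _ _ hdeg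
  rw [card_interedges_sdiff_comap_top_union f g hNM hfN hfNM hfM,
    card_interedges_comap_top_union f g hNM hfN hfNM hfM, card_interedges_union_self hNM,
    card_interedges_comm G N M]
  linarith

theorem CliqueFreeOn.exists_card_interedges_sdiff_comap_top_add_le (k : ℕ) {s : Finset V}
    (h : G.CliqueFreeOn s (k + 2)) :
    ∃ f : V → Fin (k + 1),
      #((G \ (⊤ : SimpleGraph (Fin (k + 1))).comap f).interedges s s) + #(G.interedges s s)
        ≤ #(((⊤ : SimpleGraph (Fin (k + 1))).comap f).interedges s s) := by
  induction k generalizing s with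
  | zero =>
    have hs : ∀ u ∈ s, ∀ v ∈ s, ¬G.Adj u v := fun u hu v hv huv ↦
      (cliqueFreeOn_two G).1 h hu hv huv.ne huv
    refine ⟨0, ?_⟩
    rw [interedges_eq_empty hs, interedges_eq_empty (G := G \ (⊤ : SimpleGraph (Fin 1)).comap 0)
      fun u hu v hv huv ↦ hs u hu v hv huv.1]
    exact Nat.zero_le _
  | succ k ih =>
    rcases s.eq_empty_or_nonempty with rfl | hne
    · exact ⟨0, by simp⟩
    obtain ⟨x, hx, hmax⟩ := s.exists_max_image (fun v ↦ #{w ∈ s | G.Adj v w}) hne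
    set N : Finset V := {w ∈ s | G.Adj x w}
    have hNs : N ⊆ s := filter_subset _ _
    obtain ⟨g, hg⟩ := ih (s := N) (by simpa [N, Set.inter_def] using CliqueFreeOn.of_succ G h hx)
    refine ⟨fun v ↦ if v ∈ N then (g v).castSucc else Fin.last _, ?_⟩
    have key := card_interedges_sdiff_comap_top_add_le_union
      (fun v ↦ if v ∈ N then (g v).castSucc else Fin.last _) g disjoint_sdiff
      (by intro u hu v hv; simp [hu, hv]) (by intro u hu v hv; simp_all [Fin.castSucc_ne_last])
      (by intro u hu v hv; simp_all)
      (by intro v _; rw [union_sdiff_of_subset hNs]; exact hmax v (sdiff_subset ‹_›)) hg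
    rwa [union_sdiff_of_subset hNs] at key

end SimpleGraph

/-- Theorem 4.1 (Füredi's stability theorem): if `G` is a `K_{k+1}`-free graph on `n`
vertices and `t = ex(n, K_{k+1}) - e(G)`, then `G` can be made `k`-partite by deleting at
most `t` edges, i.e. there is `f : V(G) → Fin k` such that at most `t` edges of `G` have
both endpoints in the same class of `f`. -/
theorem furedi_stability {k n : ℕ} (hk : 1 ≤ k) {V : Type} [Fintype V]
    (hV : Fintype.card V = n) (G : SimpleGraph V)
    (hfree : G.CliqueFree (k+1)) (t : ℕ)
    (ht : t = turanEx n k - G.edgeSet.ncard) :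
    ∃ f : V → Fin k,
      {e ∈ G.edgeSet | ∃ u v : V, e = s(u, v) ∧ f u = f v}.ncard ≤ t := by
  classical
  obtain ⟨k, rfl⟩ := Nat.exists_eq_add_of_le' hk
  obtain ⟨f, hf⟩ := CliqueFreeOn.exists_card_interedges_sdiff_comap_top_add_le k
    (s := univ) (by simpa using (cliqueFreeOn_univ G).2 hfree)
  have hmono : {e ∈ G.edgeSet | ∃ u v : V, e = s(u, v) ∧ f u = f v}
      = (G \ (⊤ : SimpleGraph (Fin (k + 1))).comap f).edgeSet := by
    ext e
    induction e using Sym2.ind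
    aesop
  have hK : ((⊤ : SimpleGraph (Fin (k + 1))).comap f).CliqueFree (k + 2) :=
    Colorable.cliqueFree ⟨⟨f, id⟩⟩ (lt_add_one _)
  have hturan := ncard_edgeSet_le_turanEx hK
  simp only [card_interedges_univ] at hf
  refine ⟨f, ?_⟩
  rw [hmono, ht, ← hV]
  omega
end
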